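/- arXiv:2110.06305 — 11 statements merged into one kernel-verified Lean document; each statement's English description precedes it below -/
import Mathlib

section
/- Every t-ary quasigroup of order 3 is affine: if f : (Z/3)^t → Z/3 satisfies the condition that fixing any t-1 arguments yields a bijection in the remaining argument, then there exist a_0, ..., a_{t-1} ∈ {1,2} and a ∈ Z/3 such that f(x_0,...,x_{t-1}) = a_0 x_0 + ... + a_{t-1} x_{t-1} + a for all inputs. -/
lemma perm_affine : ∀ g : ZMod 3 → ZMod 3, Function.Injective g →
    ∃ s b : ZMod 3, (s = 1 ∨ s = 2) ∧ ∀ c, g c = s * c + b := by decide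

lemma solve_lin : ∀ d y : ZMod 3, d ≠ 0 → ∃ u, d * u = y := by decide

/-- Every `t`-ary quasigroup of order 3 is affine. -/
theorem stmt_2 (t : ℕ) (f : (Fin t → ZMod 3) → ZMod 3)
    (hf : ∀ (i : Fin t) (x : Fin t → ZMod 3),
      Function.Bijective fun v => f (Function.update x i v)) :
    ∃ (a : Fin t → ZMod 3) (b : ZMod 3),
      (∀ i, a i = 1 ∨ a i = 2) ∧
      ∀ x : Fin t → ZMod 3, f x = (∑ i, a i * x i) + b := by
  induction t with
  | zero =>
    refine ⟨fun i => i.elim0, f (fun i => i.elim0), fun i => i.elim0, fun x => ?_⟩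
    have hx : x = fun i => i.elim0 := Subsingleton.elim _ _
    simp [hx]
  | succ t ih =>
    set F : ZMod 3 → (Fin t → ZMod 3) → ZMod 3 := fun c x => f (Fin.cons c x) with hFdef
    have hF : ∀ c (i : Fin t) (x : Fin t → ZMod 3),
        Function.Bijective fun v => F c (Function.update x i v) := by
      intro c i x
      have h : (fun v => F c (Function.update x i v)) =
          fun v => f (Function.update (Fin.cons c x) i.succ v) := by
        funext v
        simp only [hFdef, Fin.cons_update]
      rw [h]
      exact hf i.succ _
    choose a b ha hb using fun c => ih (F c) (hF c)
    have hinj : ∀ x : Fin t → ZMod 3, Function.Injective fun c => F c x := by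
      intro x
      have h : (fun c => F c x) = fun v => f (Function.update (Fin.cons 0 x) 0 v) := by
        funext v
        simp only [hFdef, Fin.update_cons_zero]
      rw [h]
      exact (hf 0 _).injective
    -- a is constant in c
    have haeq : ∀ c i, a c i = a 0 i := by
      intro c i
      by_contra h
      have hc : c ≠ 0 := by rintro rfl; exact h rfl
      have hd : a c i - a 0 i ≠ 0 := fun hd => h (by linear_combination hd)
      obtain ⟨u, hu⟩ := solve_lin _ (b 0 - b c) hd
      set x : Fin t → ZMod 3 := Function.update (fun _ => 0) i u with hx
      have hsum : ∀ c', ∑ j, a c' j * x j = a c' i * u := by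
        intro c'
        rw [Finset.sum_eq_single i]
        · simp [hx]
        · intro j _ hj; simp [hx, Function.update_of_ne hj]
        · simp
      have : F c x = F 0 x := by
        rw [hb c x, hb 0 x, hsum, hsum]
        linear_combination hu
      exact hc (hinj x this)
    -- b is an injective function of c
    have hbinj : Function.Injective b := by
      have h : (fun c => F c (fun _ => 0)) = b := by
        funext c
        rw [hb c]
        simp
      rw [← h]
      exact hinj _
    obtain ⟨s, bb, hs, hsb⟩ := perm_affine b hbinj
    refine ⟨Fin.cons s (a 0), bb, ?_, ?_⟩
    · intro i
      refine Fin.cases ?_ ?_ i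
      · exact hs
      · intro j; exact ha 0 j
    · intro y
      have hy : f y = F (y 0) (Fin.tail y) := by
        rw [hFdef]
        simp [Fin.cons_self_tail]
      rw [hy, hb, hsb, Fin.sum_univ_succ]
      simp only [Fin.cons_zero, Fin.cons_succ]
      have : ∀ j, a (y 0) j = a 0 j := fun j => haeq (y 0) j
      rw [Finset.sum_congr rfl (fun j _ => by rw [this j])]
      simp only [Fin.tail]
      ring
end

section
/- The number of t-ary quasigroups of order 3 is exactly 3 · 2^t. -/
private lemma lemA : ∀ σ τ : ZMod 3 → ZMod 3, (∀ a b, σ a = σ b → a = b) → (∀ a b, τ a = τ b → a = b) →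
    (∀ v, τ v ≠ σ v) → ∀ v w, τ v - σ v = τ w - σ w := by decide

private lemma lemA2 : ∀ σ : ZMod 3 → ZMod 3, (∀ a b, σ a = σ b → a = b) →
    ∀ v, σ v = σ 0 + (σ 1 - σ 0) * v := by decide

private lemma locconst {t : ℕ} (h : (Fin t → ZMod 3) → ZMod 3)
    (H : ∀ (x : Fin t → ZMod 3) (j : Fin t) (w : ZMod 3), h (Function.update x j w) = h x) :
    ∀ x y, h x = h y := by
  have key : ∀ S : Finset (Fin t), ∀ x y : Fin t → ZMod 3,
      (∀ j ∉ S, x j = y j) → h x = h y := by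
    intro S
    induction S using Finset.induction_on with
    | empty =>
        intro x y hxy
        congr 1
        exact funext fun j => hxy j (by simp)
    | @insert a S ha ih =>
        intro x y hxy
        have e1 : h x = h (Function.update x a (y a)) := (H x a (y a)).symm
        rw [e1]
        apply ih
        intro j hj
        by_cases hja : j = a
        · subst hja; simp
        · rw [Function.update_of_ne hja]
          exact hxy j (by simp [hja, hj])
  intro x y
  exact key Finset.univ x y (fun j hj => absurd (Finset.mem_univ j) hj)

private lemma dconst {t : ℕ} (f : (Fin t → ZMod 3) → ZMod 3)
    (hf : ∀ (i : Fin t) (x : Fin t → ZMod 3),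
        Function.Bijective fun v => f (Function.update x i v)) (i : Fin t) :
    ∀ x y, f (Function.update x i 1) - f (Function.update x i 0)
         = f (Function.update y i 1) - f (Function.update y i 0) := by
  apply locconst (fun x => f (Function.update x i 1) - f (Function.update x i 0))
  intro x j w
  by_cases hj : j = i
  · subst hj
    show f (Function.update (Function.update x j w) j 1) - f (Function.update (Function.update x j w) j 0)
        = f (Function.update x j 1) - f (Function.update x j 0)
    rw [Function.update_idem, Function.update_idem]
  · have comm : ∀ (c w' : ZMod 3), Function.update (Function.update x j w') i c
        = Function.update (Function.update x i c) j w' :=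
      fun c w' => Function.update_comm hj w' c x
    have hσ : ∀ a b : ZMod 3, f (Function.update (Function.update x i 0) j a)
        = f (Function.update (Function.update x i 0) j b) → a = b :=
      fun a b hab => (hf j (Function.update x i 0)).injective hab
    have hτ : ∀ a b : ZMod 3, f (Function.update (Function.update x i 1) j a)
        = f (Function.update (Function.update x i 1) j b) → a = b :=
      fun a b hab => (hf j (Function.update x i 1)).injective hab
    have hne : ∀ v : ZMod 3, f (Function.update (Function.update x i 1) j v)
        ≠ f (Function.update (Function.update x i 0) j v) := by
      intro v hv
      rw [← comm, ← comm] at hv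
      exact one_ne_zero ((hf i (Function.update x j v)).injective hv)
    have := lemA (fun v => f (Function.update (Function.update x i 0) j v))
      (fun v => f (Function.update (Function.update x i 1) j v)) hσ hτ hne w (x j)
    have e : ∀ c : ZMod 3, Function.update (Function.update x i c) j (x j) = Function.update x i c := by
      intro c
      conv_lhs => rw [show x j = Function.update x i c j from (Function.update_of_ne hj c x).symm]
      exact Function.update_eq_self j _
    rw [comm, comm, this, e, e]

private lemma classify {t : ℕ} (f : (Fin t → ZMod 3) → ZMod 3)
    (hf : ∀ (i : Fin t) (x : Fin t → ZMod 3),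
        Function.Bijective fun v => f (Function.update x i v)) :
    ∀ x, f x = f 0 + ∑ i, (f (Function.update 0 i 1) - f 0) * x i := by
  set d : Fin t → ZMod 3 := fun i => f (Function.update 0 i 1) - f 0 with hd
  have slice : ∀ (i : Fin t) (x : Fin t → ZMod 3) (v : ZMod 3),
      f (Function.update x i v) = f (Function.update x i 0) + d i * v := by
    intro i x v
    have h1 := lemA2 (fun v => f (Function.update x i v))
      (fun a b hab => (hf i x).injective hab) v
    have h2 : f (Function.update x i 1) - f (Function.update x i 0) = d i := by
      have := dconst f hf i x 0
      simpa [hd, Function.update_eq_self] using this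
    rw [h2] at h1
    exact h1
  have key : ∀ S : Finset (Fin t), ∀ x : Fin t → ZMod 3, (∀ j ∉ S, x j = 0) →
      f x = f 0 + ∑ i ∈ S, d i * x i := by
    intro S
    induction S using Finset.induction_on with
    | empty =>
        intro x hx
        have : x = 0 := funext fun j => hx j (by simp)
        simp [this]
    | @insert a S ha ih =>
        intro x hx
        have hx' : ∀ j ∉ S, Function.update x a 0 j = 0 := by
          intro j hj
          by_cases hja : j = a
          · subst hja; simp
          · rw [Function.update_of_ne hja]
            exact hx j (by simp [hja, hj])
        have e1 : Function.update (Function.update x a 0) a (x a) = x := by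
          rw [Function.update_idem, Function.update_eq_self]
        calc f x = f (Function.update (Function.update x a 0) a (x a)) := by rw [e1]
          _ = f (Function.update (Function.update x a 0) a 0) + d a * x a := slice a _ _
          _ = f (Function.update x a 0) + d a * x a := by rw [Function.update_idem]
          _ = (f 0 + ∑ i ∈ S, d i * Function.update x a 0 i) + d a * x a := by rw [ih _ hx']
          _ = f 0 + ∑ i ∈ insert a S, d i * x i := by
              rw [Finset.sum_insert ha]
              have hs : ∑ i ∈ S, d i * Function.update x a 0 i = ∑ i ∈ S, d i * x i :=
                Finset.sum_congr rfl fun i hi => by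
                  rw [Function.update_of_ne (by rintro rfl; exact ha hi)]
              rw [hs]; ring
  intro x
  exact key Finset.univ x (fun j hj => absurd (Finset.mem_univ j) hj)

/-- The number of `t`-ary quasigroups of order 3 is exactly `3 · 2^t`. -/
theorem stmt_3 (t : ℕ) :
    Nat.card {f : (Fin t → ZMod 3) → ZMod 3 //
      ∀ (i : Fin t) (x : Fin t → ZMod 3),
        Function.Bijective fun v => f (Function.update x i v)} = 3 * 2 ^ t := by
  set Q := {f : (Fin t → ZMod 3) → ZMod 3 //
      ∀ (i : Fin t) (x : Fin t → ZMod 3),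
        Function.Bijective fun v => f (Function.update x i v)} with hQ
  -- the explicit map
  have sum_upd : ∀ (ε : Fin t → {d : ZMod 3 // d ≠ 0}) (x : Fin t → ZMod 3) (i : Fin t) (v : ZMod 3),
      ∑ j, (ε j : ZMod 3) * Function.update x i v j
        = (ε i : ZMod 3) * v + ∑ j ∈ Finset.univ.erase i, (ε j : ZMod 3) * x j := by
    intro ε x i v
    rw [← Finset.add_sum_erase _ _ (Finset.mem_univ i)]
    congr 1
    · rw [Function.update_self]
    · exact Finset.sum_congr rfl fun j hj => by
        rw [Function.update_of_ne (Finset.ne_of_mem_erase hj)]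
  have sum_single : ∀ (ε : Fin t → {d : ZMod 3 // d ≠ 0}) (i : Fin t),
      ∑ j, (ε j : ZMod 3) * Function.update (0 : Fin t → ZMod 3) i 1 j = (ε i : ZMod 3) := by
    intro ε i
    rw [Finset.sum_eq_single i]
    · rw [Function.update_self, mul_one]
    · intro j _ hj
      rw [Function.update_of_ne hj, Pi.zero_apply, mul_zero]
    · intro h; exact absurd (Finset.mem_univ i) h
  set Φ : ZMod 3 × (Fin t → {d : ZMod 3 // d ≠ 0}) → Q := fun p =>
    ⟨fun x => p.1 + ∑ j, (p.2 j : ZMod 3) * x j, by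
      intro i x
      have hfe : (fun v : ZMod 3 => p.1 + ∑ j, (p.2 j : ZMod 3) * Function.update x i v j)
          = fun v => (p.1 + ∑ j ∈ Finset.univ.erase i, (p.2 j : ZMod 3) * x j) + (p.2 i : ZMod 3) * v := by
        funext v; rw [sum_upd]; ring
      rw [hfe]
      exact (Equiv.addLeft (p.1 + ∑ j ∈ Finset.univ.erase i, (p.2 j : ZMod 3) * x j)).bijective.comp
        (Equiv.mulLeft₀ (p.2 i : ZMod 3) (p.2 i).2).bijective⟩ with hΦ
  have hinj : Function.Injective Φ := by
    intro p q hpq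
    have hfun : (fun x : Fin t → ZMod 3 => p.1 + ∑ j, (p.2 j : ZMod 3) * x j)
        = fun x : Fin t → ZMod 3 => q.1 + ∑ j, (q.2 j : ZMod 3) * x j := congrArg Subtype.val hpq
    have h0 : p.1 = q.1 := by
      have := congrFun hfun 0
      simpa using this
    have hε : p.2 = q.2 := by
      funext i
      have := congrFun hfun (Function.update (0 : Fin t → ZMod 3) i 1)
      rw [sum_single, sum_single, h0] at this
      exact Subtype.ext (add_left_cancel this)
    exact Prod.ext h0 hε
  have hsurj : Function.Surjective Φ := by
    rintro ⟨f, hf⟩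
    have hne : ∀ i : Fin t, f (Function.update (0 : Fin t → ZMod 3) i 1) - f 0 ≠ 0 := by
      intro i h
      have hz : Function.update (0 : Fin t → ZMod 3) i 0 = 0 := by
        funext j; simp [Function.update_apply]
      have h0 : f (Function.update (0 : Fin t → ZMod 3) i 1) = f (Function.update (0 : Fin t → ZMod 3) i 0) := by
        rw [hz]; exact sub_eq_zero.mp h
      exact one_ne_zero ((hf i 0).injective h0)
    refine ⟨(f 0, fun i => ⟨f (Function.update (0 : Fin t → ZMod 3) i 1) - f 0, hne i⟩), ?_⟩
    apply Subtype.ext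
    funext x
    exact (classify f hf x).symm
  have hcard : Nat.card Q = Nat.card (ZMod 3 × (Fin t → {d : ZMod 3 // d ≠ 0})) :=
    (Nat.card_eq_of_bijective Φ ⟨hinj, hsurj⟩).symm
  rw [hcard, Nat.card_prod, Nat.card_pi]
  have h2 : Nat.card {d : ZMod 3 // d ≠ 0} = 2 := by
    rw [Nat.card_eq_fintype_card]; decide
  simp [h2, Nat.card_zmod, Finset.prod_const]
end

section
/- Let λ : (Z/3)^{n-1} → Z/3 be a function defined on the set of tuples (x_0,...,x_{n-2}) satisfying the linear constraints x_{3j+2} = μ_j - x_{3j} - x_{3j+1} for j = 0,...,(n-4)/3 (for fixed μ_j ∈ Z/3), such that λ(x) ≠ λ(y) whenever x, y are distinct tuples in this set at Hamming distance 2. Then there exists an (n-1)/3-ary quasigroup λ' of order 3 such that λ(x_0,...,x_{n-2}) = λ'(x_1 - x_0, x_4 - x_3, ..., x_{n-3} - x_{n-4}) for all tuples x in the domain. -/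
/-- The domain: tuples `(x_0,…,x_{3t-1})` over `ZMod 3` satisfying the linear constraints
`x_{3j+2} = μ_j - x_{3j} - x_{3j+1}` for all `j`. -/
def constraintSet (t : ℕ) (μ : Fin t → ZMod 3) : Set (Fin (3 * t) → ZMod 3) :=
  {x | ∀ j : Fin t,
    x ⟨3 * j.1 + 2, by have := j.2; omega⟩ =
      μ j - x ⟨3 * j.1, by have := j.2; omega⟩ - x ⟨3 * j.1 + 1, by have := j.2; omega⟩}

/-- The vector of block differences `(x_1-x_0, x_4-x_3, …)`. -/
def blockDiffs (t : ℕ) (x : Fin (3 * t) → ZMod 3) : Fin t → ZMod 3 :=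
  fun j => x ⟨3 * j.1 + 1, by have := j.2; omega⟩ - x ⟨3 * j.1, by have := j.2; omega⟩

/- ===================== auxiliary material ===================== -/

namespace Stmt5Aux

variable {t : ℕ}

/-- first index of block `j` -/
def i0 (j : Fin t) : Fin (3 * t) := ⟨3 * j.1, by have := j.2; omega⟩
/-- second index of block `j` -/
def i1 (j : Fin t) : Fin (3 * t) := ⟨3 * j.1 + 1, by have := j.2; omega⟩
/-- third index of block `j` -/
def i2 (j : Fin t) : Fin (3 * t) := ⟨3 * j.1 + 2, by have := j.2; omega⟩

/-- block of an index -/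
def blk (i : Fin (3 * t)) : Fin t := ⟨i.1 / 3, by have := i.2; omega⟩

lemma constraint_iff (μ : Fin t → ZMod 3) (x : Fin (3 * t) → ZMod 3) :
    x ∈ constraintSet t μ ↔ ∀ j : Fin t, x (i2 j) = μ j - x (i0 j) - x (i1 j) :=
  Iff.rfl

lemma blockDiffs_eq (x : Fin (3 * t) → ZMod 3) (j : Fin t) :
    blockDiffs t x j = x (i1 j) - x (i0 j) := rfl

/-- distinct values at two indices force Hamming distance 2 -/
lemma ham2 {α : Type*} [DecidableEq α] {n : ℕ} (x y : Fin n → α) (a b : Fin n)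
    (hab : a ≠ b) (ha : x a ≠ y a) (hb : x b ≠ y b)
    (h : ∀ i, i ≠ a → i ≠ b → x i = y i) : hammingDist x y = 2 := by
  have hfilter : (Finset.univ.filter fun i => x i ≠ y i) = {a, b} := by
    ext i
    simp only [Finset.mem_filter, Finset.mem_univ, true_and, Finset.mem_insert,
      Finset.mem_singleton]
    constructor
    · intro hi
      by_contra hc
      push_neg at hc
      exact hi (h i hc.1 hc.2)
    · rintro (rfl | rfl) <;> assumption
  show (Finset.univ.filter fun i => x i ≠ y i).card = 2
  rw [hfilter, Finset.card_insert_of_notMem (by simpa using hab), Finset.card_singleton]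

lemma zmod3_pigeon {a b u v : ZMod 3} (huv : u ≠ v) (h1 : a ≠ u) (h2 : a ≠ v)
    (h3 : b ≠ u) (h4 : b ≠ v) : a = b := by
  revert huv h1 h2 h3 h4; revert a b u v; decide

section BlockEq

variable (μ : Fin t → ZMod 3) (lam : (Fin (3 * t) → ZMod 3) → ZMod 3)

/-- tweak: add 1 at position `p`, subtract 1 at position `q` -/
def tweak (x : Fin (3 * t) → ZMod 3) (p q : ℕ) : Fin (3 * t) → ZMod 3 :=
  fun i => if i.1 = p then x i + 1 else if i.1 = q then x i - 1 else x i

lemma tweak_of_ne (x : Fin (3 * t) → ZMod 3) (p q : ℕ) (i : Fin (3 * t))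
    (hp : i.1 ≠ p) (hq : i.1 ≠ q) : tweak x p q i = x i := by
  simp only [tweak, if_neg hp, if_neg hq]

lemma tweak_p (x : Fin (3 * t) → ZMod 3) (p q : ℕ) (i : Fin (3 * t))
    (hp : i.1 = p) : tweak x p q i = x i + 1 := by
  simp only [tweak, if_pos hp]

lemma tweak_q (x : Fin (3 * t) → ZMod 3) (p q : ℕ) (i : Fin (3 * t))
    (hp : i.1 ≠ p) (hq : i.1 = q) : tweak x p q i = x i - 1 := by
  simp only [tweak, if_neg hp, if_pos hq]

/-- The key single-block lemma: if `x` and `y` lie in the constraint set, agree outside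
block `j`, and have the same block difference at `j`, then `lam x = lam y`. -/
lemma block_eq
    (hlam : ∀ x ∈ constraintSet t μ, ∀ y ∈ constraintSet t μ,
      hammingDist x y = 2 → lam x ≠ lam y)
    (j : Fin t) (x y : Fin (3 * t) → ZMod 3)
    (hx : x ∈ constraintSet t μ) (hy : y ∈ constraintSet t μ)
    (hd : blockDiffs t x j = blockDiffs t y j)
    (hoth : ∀ i : Fin (3 * t), i.1 < 3 * j.1 ∨ 3 * j.1 + 3 ≤ i.1 → x i = y i) :
    lam x = lam y := by
  set c : ZMod 3 := y (i0 j) - x (i0 j) with hc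
  have e0 : y (i0 j) = x (i0 j) + c := by rw [hc]; ring
  have e1 : y (i1 j) = x (i1 j) + c := by
    have hd' : x (i1 j) - x (i0 j) = y (i1 j) - y (i0 j) := hd
    rw [hc]; linear_combination -hd'
  have h3 : (3 : ZMod 3) * c = 0 := by
    have : (3 : ZMod 3) = 0 := by decide
    rw [this]; ring
  have e2 : y (i2 j) = x (i2 j) + c := by
    have hxj := hx j
    have hyj := hy j
    have hxj' : x (i2 j) = μ j - x (i0 j) - x (i1 j) := hxj
    have hyj' : y (i2 j) = μ j - y (i0 j) - y (i1 j) := hyj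
    linear_combination hyj' - hxj' - e0 - e1 - h3
  -- index facts
  have hi01 : (i0 j) ≠ (i1 j) := by
    intro h; have := congrArg Fin.val h; simp only [i0, i1] at this; omega
  have hi02 : (i0 j) ≠ (i2 j) := by
    intro h; have := congrArg Fin.val h; simp only [i0, i2] at this; omega
  have hi12 : (i1 j) ≠ (i2 j) := by
    intro h; have := congrArg Fin.val h; simp only [i1, i2] at this; omega
  have hval0 : (i0 j).1 = 3 * j.1 := rfl
  have hval1 : (i1 j).1 = 3 * j.1 + 1 := rfl
  have hval2 : (i2 j).1 = 3 * j.1 + 2 := rfl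
  by_cases hc0 : c = 0
  · -- x = y
    have : x = y := by
      funext i
      by_cases hin : i.1 < 3 * j.1 ∨ 3 * j.1 + 3 ≤ i.1
      · exact hoth i hin
      · push_neg at hin
        have hcase : i.1 = 3 * j.1 ∨ i.1 = 3 * j.1 + 1 ∨ i.1 = 3 * j.1 + 2 := by omega
        rcases hcase with h | h | h
        · have : i = i0 j := Fin.ext h
          rw [this, e0, hc0, add_zero]
        · have : i = i1 j := Fin.ext h
          rw [this, e1, hc0, add_zero]
        · have : i = i2 j := Fin.ext h
          rw [this, e2, hc0, add_zero]
    rw [this]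
  · -- c ≠ 0, build auxiliary points
    have hcc : c = 1 ∨ c = 2 := by
      have : ∀ d : ZMod 3, d ≠ 0 → d = 1 ∨ d = 2 := by decide
      exact this c hc0
    set z1 := tweak x (3 * j.1 + 1) (3 * j.1 + 2) with hz1
    set z2 := tweak x (3 * j.1) (3 * j.1 + 2) with hz2
    -- values of z1
    have z1_0 : z1 (i0 j) = x (i0 j) := tweak_of_ne _ _ _ _ (by omega) (by omega)
    have z1_1 : z1 (i1 j) = x (i1 j) + 1 := tweak_p _ _ _ _ rfl
    have z1_2 : z1 (i2 j) = x (i2 j) - 1 := tweak_q _ _ _ _ (by omega) rfl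
    have z1_off : ∀ i : Fin (3 * t), i.1 < 3 * j.1 ∨ 3 * j.1 + 3 ≤ i.1 → z1 i = x i := by
      intro i hi; exact tweak_of_ne _ _ _ _ (by omega) (by omega)
    -- values of z2
    have z2_0 : z2 (i0 j) = x (i0 j) + 1 := tweak_p _ _ _ _ rfl
    have z2_1 : z2 (i1 j) = x (i1 j) := tweak_of_ne _ _ _ _ (by omega) (by omega)
    have z2_2 : z2 (i2 j) = x (i2 j) - 1 := tweak_q _ _ _ _ (by omega) rfl
    have z2_off : ∀ i : Fin (3 * t), i.1 < 3 * j.1 ∨ 3 * j.1 + 3 ≤ i.1 → z2 i = x i := by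
      intro i hi; exact tweak_of_ne _ _ _ _ (by omega) (by omega)
    -- membership
    have hz1S : z1 ∈ constraintSet t μ := by
      intro j'
      by_cases hj : j'.1 = j.1
      · have hj' : j' = j := Fin.ext hj
        subst hj'
        show z1 (i2 j') = μ j' - z1 (i0 j') - z1 (i1 j')
        rw [z1_0, z1_1, z1_2]
        have := hx j'
        have hxj' : x (i2 j') = μ j' - x (i0 j') - x (i1 j') := this
        rw [hxj']; ring
      · show z1 (i2 j') = μ j' - z1 (i0 j') - z1 (i1 j')
        have a0 : z1 (i0 j') = x (i0 j') := tweak_of_ne _ _ _ _ (by simp only [i0]; omega) (by simp only [i0]; omega)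
        have a1 : z1 (i1 j') = x (i1 j') := tweak_of_ne _ _ _ _ (by simp only [i1]; omega) (by simp only [i1]; omega)
        have a2 : z1 (i2 j') = x (i2 j') := tweak_of_ne _ _ _ _ (by simp only [i2]; omega) (by simp only [i2]; omega)
        rw [a0, a1, a2]
        exact hx j'
    have hz2S : z2 ∈ constraintSet t μ := by
      intro j'
      by_cases hj : j'.1 = j.1
      · have hj' : j' = j := Fin.ext hj
        subst hj'
        show z2 (i2 j') = μ j' - z2 (i0 j') - z2 (i1 j')
        rw [z2_0, z2_1, z2_2]
        have hxj' : x (i2 j') = μ j' - x (i0 j') - x (i1 j') := hx j'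
        rw [hxj']; ring
      · show z2 (i2 j') = μ j' - z2 (i0 j') - z2 (i1 j')
        have a0 : z2 (i0 j') = x (i0 j') := tweak_of_ne _ _ _ _ (by simp only [i0]; omega) (by simp only [i0]; omega)
        have a1 : z2 (i1 j') = x (i1 j') := tweak_of_ne _ _ _ _ (by simp only [i1]; omega) (by simp only [i1]; omega)
        have a2 : z2 (i2 j') = x (i2 j') := tweak_of_ne _ _ _ _ (by simp only [i2]; omega) (by simp only [i2]; omega)
        rw [a0, a1, a2]
        exact hx j'
    -- little arithmetic facts over ZMod 3
    have f1 : ∀ a : ZMod 3, a ≠ a + 1 := by decide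
    have f2 : ∀ a : ZMod 3, a ≠ a - 1 := by decide
    have f3 : ∀ a : ZMod 3, a + 1 ≠ a - 1 := by decide
    have f4 : ∀ a : ZMod 3, a + 2 ≠ a := by decide
    have f5 : ∀ a : ZMod 3, a + 2 ≠ a + 1 := by decide
    have f6 : ∀ a : ZMod 3, a + 2 = a - 1 := by decide
    -- the "third coordinate" helper: i in block j
    have inblock : ∀ i : Fin (3 * t), ¬(i.1 < 3 * j.1 ∨ 3 * j.1 + 3 ≤ i.1) →
        i = i0 j ∨ i = i1 j ∨ i = i2 j := by
      intro i hi
      push_neg at hi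
      have hcase : i.1 = 3 * j.1 ∨ i.1 = 3 * j.1 + 1 ∨ i.1 = 3 * j.1 + 2 := by omega
      rcases hcase with h | h | h
      · exact Or.inl (Fin.ext h)
      · exact Or.inr (Or.inl (Fin.ext h))
      · exact Or.inr (Or.inr (Fin.ext h))
    -- distances
    have dxz1 : hammingDist x z1 = 2 := by
      apply ham2 x z1 (i1 j) (i2 j) hi12
      · rw [z1_1]; exact f1 _
      · rw [z1_2]; exact f2 _
      · intro i hia hib
        by_cases hin : i.1 < 3 * j.1 ∨ 3 * j.1 + 3 ≤ i.1
        · exact (z1_off i hin).symm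
        · rcases inblock i hin with h | h | h
          · rw [h, z1_0]
          · exact absurd h hia
          · exact absurd h hib
    have dxz2 : hammingDist x z2 = 2 := by
      apply ham2 x z2 (i0 j) (i2 j) hi02
      · rw [z2_0]; exact f1 _
      · rw [z2_2]; exact f2 _
      · intro i hia hib
        by_cases hin : i.1 < 3 * j.1 ∨ 3 * j.1 + 3 ≤ i.1
        · exact (z2_off i hin).symm
        · rcases inblock i hin with h | h | h
          · exact absurd h hia
          · rw [h, z2_1]
          · exact absurd h hib
    have dz12 : hammingDist z1 z2 = 2 := by
      apply ham2 z1 z2 (i0 j) (i1 j) hi01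
      · rw [z1_0, z2_0]; exact f1 _
      · rw [z1_1, z2_1]; exact (f1 _).symm
      · intro i hia hib
        by_cases hin : i.1 < 3 * j.1 ∨ 3 * j.1 + 3 ≤ i.1
        · rw [z1_off i hin, z2_off i hin]
        · rcases inblock i hin with h | h | h
          · exact absurd h hia
          · exact absurd h hib
          · rw [h, z1_2, z2_2]
    have yoff : ∀ i : Fin (3 * t), i.1 < 3 * j.1 ∨ 3 * j.1 + 3 ≤ i.1 → y i = x i :=
      fun i hi => (hoth i hi).symm
    have dyz1 : hammingDist y z1 = 2 := by
      rcases hcc with hc1 | hc2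
      · apply ham2 y z1 (i0 j) (i2 j) hi02
        · rw [e0, z1_0, hc1]; exact (f1 _).symm
        · rw [e2, z1_2, hc1]; exact f3 _
        · intro i hia hib
          by_cases hin : i.1 < 3 * j.1 ∨ 3 * j.1 + 3 ≤ i.1
          · rw [yoff i hin, z1_off i hin]
          · rcases inblock i hin with h | h | h
            · exact absurd h hia
            · rw [h, e1, z1_1, hc1]
            · exact absurd h hib
      · apply ham2 y z1 (i0 j) (i1 j) hi01
        · rw [e0, z1_0, hc2]; exact f4 _
        · rw [e1, z1_1, hc2]; exact f5 _
        · intro i hia hib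
          by_cases hin : i.1 < 3 * j.1 ∨ 3 * j.1 + 3 ≤ i.1
          · rw [yoff i hin, z1_off i hin]
          · rcases inblock i hin with h | h | h
            · exact absurd h hia
            · exact absurd h hib
            · rw [h, e2, z1_2, hc2, f6]
    have dyz2 : hammingDist y z2 = 2 := by
      rcases hcc with hc1 | hc2
      · apply ham2 y z2 (i1 j) (i2 j) hi12
        · rw [e1, z2_1, hc1]; exact (f1 _).symm
        · rw [e2, z2_2, hc1]; exact f3 _
        · intro i hia hib
          by_cases hin : i.1 < 3 * j.1 ∨ 3 * j.1 + 3 ≤ i.1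
          · rw [yoff i hin, z2_off i hin]
          · rcases inblock i hin with h | h | h
            · rw [h, e0, z2_0, hc1]
            · exact absurd h hia
            · exact absurd h hib
      · apply ham2 y z2 (i0 j) (i1 j) hi01
        · rw [e0, z2_0, hc2]; exact f5 _
        · rw [e1, z2_1, hc2]; exact f4 _
        · intro i hia hib
          by_cases hin : i.1 < 3 * j.1 ∨ 3 * j.1 + 3 ≤ i.1
          · rw [yoff i hin, z2_off i hin]
          · rcases inblock i hin with h | h | h
            · exact absurd h hia
            · exact absurd h hib
            · rw [h, e2, z2_2, hc2, f6]
    -- pigeonhole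
    exact zmod3_pigeon (hlam z1 hz1S z2 hz2S dz12)
      (hlam x hx z1 hz1S dxz1) (hlam x hx z2 hz2S dxz2)
      (hlam y hy z1 hz1S dyz1) (hlam y hy z2 hz2S dyz2)

/-- Same block differences implies same `lam` value. -/
lemma lam_eq_of_blockDiffs
    (hlam : ∀ x ∈ constraintSet t μ, ∀ y ∈ constraintSet t μ,
      hammingDist x y = 2 → lam x ≠ lam y)
    (x y : Fin (3 * t) → ZMod 3)
    (hx : x ∈ constraintSet t μ) (hy : y ∈ constraintSet t μ)
    (hd : blockDiffs t x = blockDiffs t y) : lam x = lam y := by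
  set mix : ℕ → (Fin (3 * t) → ZMod 3) :=
    fun k i => if i.1 < 3 * k then y i else x i with hmix
  have mix_val : ∀ k (i : Fin (3 * t)), mix k i = if i.1 < 3 * k then y i else x i :=
    fun k i => rfl
  have key : ∀ k, k ≤ t → mix k ∈ constraintSet t μ ∧ lam (mix k) = lam x := by
    intro k
    induction k with
    | zero =>
      intro _
      have : mix 0 = x := by
        funext i; rw [mix_val]; simp
      rw [this]; exact ⟨hx, rfl⟩
    | succ k ih =>
      intro hk
      obtain ⟨hmem, hval⟩ := ih (by omega)
      have hkt : k < t := by omega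
      -- membership of mix (k+1)
      have hmem' : mix (k + 1) ∈ constraintSet t μ := by
        intro j'
        show mix (k+1) (i2 j') = μ j' - mix (k+1) (i0 j') - mix (k+1) (i1 j')
        by_cases hj : j'.1 < k + 1
        · have b0 : mix (k+1) (i0 j') = y (i0 j') := by
            rw [mix_val]; rw [if_pos (by show 3 * j'.1 < 3*(k+1); omega)]
          have b1 : mix (k+1) (i1 j') = y (i1 j') := by
            rw [mix_val]; rw [if_pos (by show 3 * j'.1 + 1 < 3*(k+1); omega)]
          have b2 : mix (k+1) (i2 j') = y (i2 j') := by
            rw [mix_val]; rw [if_pos (by show 3 * j'.1 + 2 < 3*(k+1); omega)]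
          rw [b0, b1, b2]; exact hy j'
        · have b0 : mix (k+1) (i0 j') = x (i0 j') := by
            rw [mix_val]; rw [if_neg (by show ¬ (3 * j'.1 < 3*(k+1)); omega)]
          have b1 : mix (k+1) (i1 j') = x (i1 j') := by
            rw [mix_val]; rw [if_neg (by show ¬ (3 * j'.1 + 1 < 3*(k+1)); omega)]
          have b2 : mix (k+1) (i2 j') = x (i2 j') := by
            rw [mix_val]; rw [if_neg (by show ¬ (3 * j'.1 + 2 < 3*(k+1)); omega)]
          rw [b0, b1, b2]; exact hx j'
      refine ⟨hmem', ?_⟩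
      have hstep : lam (mix k) = lam (mix (k + 1)) := by
        apply block_eq μ lam hlam ⟨k, hkt⟩ (mix k) (mix (k+1)) hmem hmem'
        · -- same block diff at block k
          show mix k (i1 ⟨k, hkt⟩) - mix k (i0 ⟨k, hkt⟩)
              = mix (k+1) (i1 ⟨k, hkt⟩) - mix (k+1) (i0 ⟨k, hkt⟩)
          have a0 : mix k (i0 ⟨k, hkt⟩) = x (i0 ⟨k, hkt⟩) := by
            rw [mix_val]; rw [if_neg (by show ¬ (3 * k < 3 * k); omega)]
          have a1 : mix k (i1 ⟨k, hkt⟩) = x (i1 ⟨k, hkt⟩) := by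
            rw [mix_val]; rw [if_neg (by show ¬ (3 * k + 1 < 3 * k); omega)]
          have b0 : mix (k+1) (i0 ⟨k, hkt⟩) = y (i0 ⟨k, hkt⟩) := by
            rw [mix_val]; rw [if_pos (by show 3 * k < 3 * (k+1); omega)]
          have b1 : mix (k+1) (i1 ⟨k, hkt⟩) = y (i1 ⟨k, hkt⟩) := by
            rw [mix_val]; rw [if_pos (by show 3 * k + 1 < 3 * (k+1); omega)]
          rw [a0, a1, b0, b1]
          have := congrFun hd ⟨k, hkt⟩
          exact this
        · intro i hi
          rcases hi with hi | hi
          · have hlt : i.1 < 3 * k := hi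
            rw [mix_val, mix_val, if_pos (by omega), if_pos (by omega)]
          · have hge : 3 * k + 3 ≤ i.1 := hi
            rw [mix_val, mix_val, if_neg (by omega), if_neg (by omega)]
      rw [← hstep, hval]
  have hmixt : mix t = y := by
    funext i; rw [mix_val, if_pos i.2]
  have := (key t le_rfl).2
  rw [hmixt] at this
  exact this.symm

/-- canonical representative with given block differences -/
def rep (μ : Fin t → ZMod 3) (d : Fin t → ZMod 3) : Fin (3 * t) → ZMod 3 :=
  fun i => if i.1 % 3 = 0 then 0 else if i.1 % 3 = 1 then d (blk i)
    else μ (blk i) - d (blk i)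

lemma blk_i0 (j : Fin t) : blk (i0 j) = j := Fin.ext (by show 3 * j.1 / 3 = j.1; omega)
lemma blk_i1 (j : Fin t) : blk (i1 j) = j := Fin.ext (by show (3 * j.1 + 1) / 3 = j.1; omega)
lemma blk_i2 (j : Fin t) : blk (i2 j) = j := Fin.ext (by show (3 * j.1 + 2) / 3 = j.1; omega)

lemma rep_i0 (μ d : Fin t → ZMod 3) (j : Fin t) : rep μ d (i0 j) = 0 := by
  simp only [rep]
  rw [if_pos (by show 3 * j.1 % 3 = 0; omega)]

lemma rep_i1 (μ d : Fin t → ZMod 3) (j : Fin t) : rep μ d (i1 j) = d j := by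
  simp only [rep]
  rw [if_neg (by show ¬ ((3 * j.1 + 1) % 3 = 0); omega),
    if_pos (by show (3 * j.1 + 1) % 3 = 1; omega), blk_i1]

lemma rep_i2 (μ d : Fin t → ZMod 3) (j : Fin t) : rep μ d (i2 j) = μ j - d j := by
  simp only [rep]
  rw [if_neg (by show ¬ ((3 * j.1 + 2) % 3 = 0); omega),
    if_neg (by show ¬ ((3 * j.1 + 2) % 3 = 1); omega), blk_i2]

lemma rep_mem (μ d : Fin t → ZMod 3) : rep μ d ∈ constraintSet t μ := by
  intro j
  show rep μ d (i2 j) = μ j - rep μ d (i0 j) - rep μ d (i1 j)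
  rw [rep_i0, rep_i1, rep_i2]; ring

lemma blockDiffs_rep (μ d : Fin t → ZMod 3) : blockDiffs t (rep μ d) = d := by
  funext j
  show rep μ d (i1 j) - rep μ d (i0 j) = d j
  rw [rep_i0, rep_i1]; ring

lemma rep_congr (μ d d' : Fin t → ZMod 3) (i : Fin (3 * t))
    (h : d (blk i) = d' (blk i)) : rep μ d i = rep μ d' i := by
  simp only [rep, h]

end BlockEq

end Stmt5Aux

open Stmt5Aux in
/-- If `λ` is defined on the constraint set and takes distinct values on
tuples at Hamming distance 2, then `λ` factors through the block differences via a
`t`-ary quasigroup of order 3 (here `t = (n-1)/3`, `n = 3t+1`). -/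
theorem stmt_5 (t : ℕ) (ht : 1 ≤ t) (μ : Fin t → ZMod 3)
    (lam : (Fin (3 * t) → ZMod 3) → ZMod 3)
    (hlam : ∀ x ∈ constraintSet t μ, ∀ y ∈ constraintSet t μ,
      hammingDist x y = 2 → lam x ≠ lam y) :
    ∃ lam' : (Fin t → ZMod 3) → ZMod 3,
      (∀ (i : Fin t) (z : Fin t → ZMod 3),
        Function.Bijective fun v => lam' (Function.update z i v)) ∧
      ∀ x ∈ constraintSet t μ, lam x = lam' (blockDiffs t x) := by
  refine ⟨fun d => lam (rep μ d), ?_, ?_⟩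
  · intro j z
    rw [← Finite.injective_iff_bijective]
    intro v w hvw
    by_contra hne
    dsimp only at hvw
    apply hlam (rep μ (Function.update z j v)) (rep_mem μ _)
      (rep μ (Function.update z j w)) (rep_mem μ _) ?_ hvw
    apply ham2 _ _ (i1 j) (i2 j)
    · intro h; have := congrArg Fin.val h; simp only [i1, i2] at this; omega
    · rw [rep_i1, rep_i1, Function.update_self, Function.update_self]
      exact hne
    · rw [rep_i2, rep_i2, Function.update_self, Function.update_self]
      intro h
      exact hne (by linear_combination -h)
    · intro i hia hib
      by_cases h0 : i.1 % 3 = 0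
      · simp only [rep, if_pos h0]
      · apply rep_congr
        have hblk : blk i ≠ j := by
          intro h
          have hval : i.1 / 3 = j.1 := congrArg Fin.val h
          have h3 : i.1 % 3 = 1 ∨ i.1 % 3 = 2 := by omega
          rcases h3 with h3 | h3
          · exact hia (Fin.ext (by show i.1 = 3 * j.1 + 1; omega))
          · exact hib (Fin.ext (by show i.1 = 3 * j.1 + 2; omega))
        rw [Function.update_of_ne hblk, Function.update_of_ne hblk]
  · intro x hx
    exact lam_eq_of_blockDiffs μ lam hlam x (rep μ (blockDiffs t x)) hx
      (rep_mem μ _) (blockDiffs_rep μ _).symm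
end

section
/- Conversely, if λ' is any (n-1)/3-ary quasigroup of order 3 and λ is defined on the set of tuples (x_0,...,x_{n-2}) ∈ (Z/3)^{n-1} satisfying x_{3j+2} = μ_j - x_{3j} - x_{3j+1} for all j by λ(x_0,...,x_{n-2}) = λ'(x_1-x_0, x_4-x_3, ..., x_{n-3}-x_{n-4}), then λ(x) ≠ λ(y) for all distinct x, y in the domain at Hamming distance exactly 2. -/
lemma zmod3_third : ∀ A B C A' B' C' : ZMod 3,
    A + B + C = A' + B' + C' → A = A' → B = B' → C = C' := by decide

lemma zmod3_L2 : ∀ x0 x1 x2 y0 y1 y2 : ZMod 3, x0+x1+x2 = y0+y1+y2 →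
    x2 = y2 → x0 ≠ y0 → x1 - x0 ≠ y1 - y0 := by decide

lemma zmod3_L1 : ∀ x0 x1 x2 y0 y1 y2 : ZMod 3, x0+x1+x2 = y0+y1+y2 →
    x1 = y1 → x0 ≠ y0 → x1 - x0 ≠ y1 - y0 := by decide

lemma zmod3_L0 : ∀ x0 x1 x2 y0 y1 y2 : ZMod 3, x0+x1+x2 = y0+y1+y2 →
    x0 = y0 → x1 ≠ y1 → x1 - x0 ≠ y1 - y0 := by decide

lemma block_sum (t : ℕ) (μ : Fin t → ZMod 3) (x : Fin (3 * t) → ZMod 3)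
    (hx : x ∈ constraintSet t μ) (j : Fin t) :
    x ⟨3 * j.1, by have := j.2; omega⟩ + x ⟨3 * j.1 + 1, by have := j.2; omega⟩ +
      x ⟨3 * j.1 + 2, by have := j.2; omega⟩ = μ j := by
  have := hx j
  rw [this]; ring

/-- Conversely, if `λ'` is any `t`-ary quasigroup of order 3 and `λ` is
defined on the constraint set by `λ(x) = λ'(x_1-x_0, x_4-x_3, …)`, then `λ` takes
distinct values on distinct tuples of the domain at Hamming distance exactly 2. -/
theorem stmt_6 (t : ℕ) (ht : 1 ≤ t) (μ : Fin t → ZMod 3)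
    (lam' : (Fin t → ZMod 3) → ZMod 3)
    (hquasi : ∀ (i : Fin t) (z : Fin t → ZMod 3),
      Function.Bijective fun v => lam' (Function.update z i v))
    (lam : (Fin (3 * t) → ZMod 3) → ZMod 3)
    (hlam : ∀ x ∈ constraintSet t μ, lam x = lam' (blockDiffs t x)) :
    ∀ x ∈ constraintSet t μ, ∀ y ∈ constraintSet t μ,
      hammingDist x y = 2 → lam x ≠ lam y := by
  intro x hx y hy hd
  have hcard : (Finset.univ.filter fun i => x i ≠ y i).card = 2 := hd
  obtain ⟨a, b, hab, hset⟩ := Finset.card_eq_two.mp hcard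
  have hmem : ∀ i : Fin (3 * t), x i ≠ y i ↔ (i = a ∨ i = b) := by
    intro i
    constructor
    · intro h
      have : i ∈ ({a, b} : Finset (Fin (3 * t))) := by
        rw [← hset]; exact Finset.mem_filter.mpr ⟨Finset.mem_univ _, h⟩
      simpa using this
    · intro h
      have : i ∈ (Finset.univ.filter fun i => x i ≠ y i) := by
        rw [hset]; simpa using h
      exact (Finset.mem_filter.mp this).2
  have ha : x a ≠ y a := (hmem a).mpr (Or.inl rfl)
  have hb : x b ≠ y b := (hmem b).mpr (Or.inr rfl)
  have hoff : ∀ i : Fin (3 * t), i ≠ a → i ≠ b → x i = y i := by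
    intro i h1 h2
    by_contra h
    rcases (hmem i).mp h with h | h <;> [exact h1 h; exact h2 h]
  -- block sums equal
  have hsum : ∀ j : Fin t,
      x ⟨3 * j.1, by have := j.2; omega⟩ + x ⟨3 * j.1 + 1, by have := j.2; omega⟩ +
        x ⟨3 * j.1 + 2, by have := j.2; omega⟩ =
      y ⟨3 * j.1, by have := j.2; omega⟩ + y ⟨3 * j.1 + 1, by have := j.2; omega⟩ +
        y ⟨3 * j.1 + 2, by have := j.2; omega⟩ := by
    intro j
    rw [block_sum t μ x hx j, block_sum t μ y hy j]
  -- a and b are in the same block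
  have hqa : a.1 / 3 < t := by have := a.2; omega
  have hqb : b.1 / 3 < t := by have := b.2; omega
  have hsame : a.1 / 3 = b.1 / 3 := by
    by_contra hne
    -- in block a.1/3 only one coordinate differs: contradiction with the sum
    set q := a.1 / 3 with hq
    have i0 : Fin (3 * t) := ⟨3 * q, by omega⟩
    have key : ∀ k : ℕ, (hk : k < 3) → k ≠ a.1 % 3 →
        x ⟨3 * q + k, by omega⟩ = y ⟨3 * q + k, by omega⟩ := by
      intro k hk hka
      apply hoff
      · intro h
        have := congrArg Fin.val h
        simp at this; omega
      · intro h
        have := congrArg Fin.val h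
        simp at this; omega
    have key0 : 0 ≠ a.1 % 3 →
        x ⟨3 * q, by omega⟩ = y ⟨3 * q, by omega⟩ := by
      intro h
      apply hoff <;>
        (intro he; have := congrArg Fin.val he; simp at this; omega)
    have hs := hsum ⟨q, hqa⟩
    simp only at hs
    have haeq : x a = y a := by
      have hr : a.1 % 3 = 0 ∨ a.1 % 3 = 1 ∨ a.1 % 3 = 2 := by omega
      rcases hr with hr | hr | hr
      · have hval : a = (⟨3 * q, by omega⟩ : Fin (3 * t)) := by
          apply Fin.ext; simp; omega
        rw [hval]
        exact zmod3_third _ _ _ _ _ _ (by linear_combination hs)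
          (key 1 (by omega) (by omega)) (key 2 (by omega) (by omega))
      · have hval : a = (⟨3 * q + 1, by omega⟩ : Fin (3 * t)) := by
          apply Fin.ext; simp; omega
        rw [hval]
        exact zmod3_third _ _ _ _ _ _ (by linear_combination hs)
          (key 2 (by omega) (by omega)) (key0 (by omega))
      · have hval : a = (⟨3 * q + 2, by omega⟩ : Fin (3 * t)) := by
          apply Fin.ext; simp; omega
        rw [hval]
        exact zmod3_third _ _ _ _ _ _ hs
          (key0 (by omega)) (key 1 (by omega) (by omega))
    exact ha haeq
  -- now both differing coordinates lie in block j0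
  have hrab : a.1 % 3 ≠ b.1 % 3 := by
    intro h; exact hab (Fin.ext (by omega))
  set j0 : Fin t := ⟨a.1 / 3, hqa⟩ with hj0
  have bd_off : ∀ i : Fin t, i ≠ j0 → blockDiffs t x i = blockDiffs t y i := by
    intro i hi
    have hiv : i.1 ≠ a.1 / 3 := by
      intro h; exact hi (Fin.ext h)
    have e1 : x ⟨3 * i.1 + 1, by have := i.2; omega⟩ =
        y ⟨3 * i.1 + 1, by have := i.2; omega⟩ := by
      apply hoff <;>
        (intro he; have := congrArg Fin.val he; simp at this; omega)
    have e0 : x ⟨3 * i.1, by have := i.2; omega⟩ =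
        y ⟨3 * i.1, by have := i.2; omega⟩ := by
      apply hoff <;>
        (intro he; have := congrArg Fin.val he; simp at this; omega)
    show x ⟨3 * i.1 + 1, by have := i.2; omega⟩ - x ⟨3 * i.1, by have := i.2; omega⟩ =
        y ⟨3 * i.1 + 1, by have := i.2; omega⟩ - y ⟨3 * i.1, by have := i.2; omega⟩
    rw [e0, e1]
  have hbd : blockDiffs t x j0 ≠ blockDiffs t y j0 := by
    have hs' : x ⟨3 * (a.1 / 3), by omega⟩ + x ⟨3 * (a.1 / 3) + 1, by omega⟩ +
          x ⟨3 * (a.1 / 3) + 2, by omega⟩ =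
        y ⟨3 * (a.1 / 3), by omega⟩ + y ⟨3 * (a.1 / 3) + 1, by omega⟩ +
          y ⟨3 * (a.1 / 3) + 2, by omega⟩ := hsum j0
    show x ⟨3 * (a.1 / 3) + 1, by omega⟩ - x ⟨3 * (a.1 / 3), by omega⟩ ≠
        y ⟨3 * (a.1 / 3) + 1, by omega⟩ - y ⟨3 * (a.1 / 3), by omega⟩
    have hcases : (a.1 % 3 = 0 ∧ b.1 % 3 = 1) ∨ (a.1 % 3 = 1 ∧ b.1 % 3 = 0) ∨
        (a.1 % 3 = 0 ∧ b.1 % 3 = 2) ∨ (a.1 % 3 = 2 ∧ b.1 % 3 = 0) ∨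
        (a.1 % 3 = 1 ∧ b.1 % 3 = 2) ∨ (a.1 % 3 = 2 ∧ b.1 % 3 = 1) := by omega
    have heq2 : 2 ≠ a.1 % 3 → 2 ≠ b.1 % 3 →
        x ⟨3 * (a.1 / 3) + 2, by omega⟩ = y ⟨3 * (a.1 / 3) + 2, by omega⟩ := by
      intro h1 h2
      apply hoff <;>
        (intro he; have := congrArg Fin.val he; simp at this; omega)
    have heq1 : 1 ≠ a.1 % 3 → 1 ≠ b.1 % 3 →
        x ⟨3 * (a.1 / 3) + 1, by omega⟩ = y ⟨3 * (a.1 / 3) + 1, by omega⟩ := by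
      intro h1 h2
      apply hoff <;>
        (intro he; have := congrArg Fin.val he; simp at this; omega)
    have heq0 : 0 ≠ a.1 % 3 → 0 ≠ b.1 % 3 →
        x ⟨3 * (a.1 / 3), by omega⟩ = y ⟨3 * (a.1 / 3), by omega⟩ := by
      intro h1 h2
      apply hoff <;>
        (intro he; have := congrArg Fin.val he; simp at this; omega)
    have ea0 : a.1 % 3 = 0 → a = (⟨3 * (a.1 / 3), by omega⟩ : Fin (3 * t)) := by
      intro h; apply Fin.ext; simp; omega
    have ea1 : a.1 % 3 = 1 → a = (⟨3 * (a.1 / 3) + 1, by omega⟩ : Fin (3 * t)) := by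
      intro h; apply Fin.ext; simp; omega
    have eb0 : b.1 % 3 = 0 → b = (⟨3 * (a.1 / 3), by omega⟩ : Fin (3 * t)) := by
      intro h; apply Fin.ext; simp; omega
    have eb1 : b.1 % 3 = 1 → b = (⟨3 * (a.1 / 3) + 1, by omega⟩ : Fin (3 * t)) := by
      intro h; apply Fin.ext; simp; omega
    rcases hcases with ⟨h1, h2⟩ | ⟨h1, h2⟩ | ⟨h1, h2⟩ | ⟨h1, h2⟩ | ⟨h1, h2⟩ | ⟨h1, h2⟩
    · exact zmod3_L2 _ _ _ _ _ _ hs' (heq2 (by omega) (by omega)) (ea0 h1 ▸ ha)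
    · exact zmod3_L2 _ _ _ _ _ _ hs' (heq2 (by omega) (by omega)) (eb0 h2 ▸ hb)
    · exact zmod3_L1 _ _ _ _ _ _ hs' (heq1 (by omega) (by omega)) (ea0 h1 ▸ ha)
    · exact zmod3_L1 _ _ _ _ _ _ hs' (heq1 (by omega) (by omega)) (eb0 h2 ▸ hb)
    · exact zmod3_L0 _ _ _ _ _ _ hs' (heq0 (by omega) (by omega)) (ea1 h1 ▸ ha)
    · exact zmod3_L0 _ _ _ _ _ _ hs' (heq0 (by omega) (by omega)) (eb1 h2 ▸ hb)
  have hzx : blockDiffs t x = Function.update (blockDiffs t y) j0 (blockDiffs t x j0) := by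
    funext i
    by_cases hi : i = j0
    · subst hi; simp
    · rw [Function.update_of_ne hi]; exact bd_off i hi
  rw [hlam x hx, hlam y hy]
  intro hEq
  apply hbd
  have hzy : blockDiffs t y = Function.update (blockDiffs t y) j0 (blockDiffs t y j0) := by
    simp
  rw [hzx] at hEq
  nth_rewrite 2 [hzy] at hEq
  exact (hquasi j0 (blockDiffs t y)).injective hEq
end

section
/- Let C be a ternary 1-perfect code of length n containing 0 which equals the union over μ in a subcode C* of components K_μ, where K_μ = {(x_0,...,x_{n-1}) : x_{3j+2} = μ_j - x_{3j} - x_{3j+1} for all j, and x_{n-1} = λ_μ(x_1-x_0, x_4-x_3, ..., x_{n-3}-x_{n-4})} for some (n-1)/3-ary quasigroups λ_μ of order 3. Then the vectors (1,1,1,0,...,0), (0,0,0,1,1,1,0,...,0), ..., (0,...,0,1,1,1,0) all lie in the kernel of C, i.e., C + v = C for each such vector v; consequently the kernel of C has dimension at least (n-1)/3 as a subspace of F_3^n. -/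
/-- The μ-component `K_μ` in `F_3^{3t+1}`: tuples satisfying the block constraints
`x_{3j+2} = μ_j - x_{3j} - x_{3j+1}` and whose last coordinate is the value of the
quasigroup `λ_μ` on the block differences. -/
def muComponent (t : ℕ) (μ : Fin t → ZMod 3)
    (lam : (Fin t → ZMod 3) → ZMod 3) : Set (Fin (3 * t + 1) → ZMod 3) :=
  {x | (∀ j : Fin t,
      x ⟨3 * j.1 + 2, by have := j.2; omega⟩ =
        μ j - x ⟨3 * j.1, by have := j.2; omega⟩ - x ⟨3 * j.1 + 1, by have := j.2; omega⟩) ∧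
    x ⟨3 * t, by omega⟩ =
      lam (fun j =>
        x ⟨3 * j.1 + 1, by have := j.2; omega⟩ - x ⟨3 * j.1, by have := j.2; omega⟩)}

/-- The vector with `1` in the three coordinates of the `j`-th block and `0` elsewhere. -/
def blockVec (t : ℕ) (j : Fin t) : Fin (3 * t + 1) → ZMod 3 :=
  fun k => if 3 * j.1 ≤ k.1 ∧ k.1 < 3 * j.1 + 3 then 1 else 0

lemma block_add_mem (t : ℕ) (j : Fin t) (μ : Fin t → ZMod 3)
    (lam : (Fin t → ZMod 3) → ZMod 3) (x : Fin (3 * t + 1) → ZMod 3)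
    (hx : x ∈ muComponent t μ lam) : blockVec t j + x ∈ muComponent t μ lam := by
  obtain ⟨h1, h2⟩ := hx
  constructor
  · intro j'
    have hj := h1 j'
    simp only [Pi.add_apply, blockVec]
    by_cases h : j'.1 = j.1
    · rw [if_pos (by omega), if_pos (by omega), if_pos (by omega)]
      rw [hj]
      have : ∀ m a b : ZMod 3, 1 + (m - a - b) = m - (1 + a) - (1 + b) := by decide
      apply this
    · rw [if_neg (by omega), if_neg (by omega), if_neg (by omega)]
      rw [hj]; ring
  · have hb0 : blockVec t j ⟨3 * t, by omega⟩ = 0 := by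
      have := j.2
      simp only [blockVec]
      rw [if_neg (by omega)]
    simp only [Pi.add_apply, hb0, zero_add]
    rw [h2]
    congr 1
    funext j'
    simp only [Pi.add_apply, blockVec]
    by_cases h : j'.1 = j.1
    · rw [if_pos (by omega), if_pos (by omega)]; ring
    · rw [if_neg (by omega), if_neg (by omega)]; ring

/-- If a ternary 1-perfect code `C` of length `n = 3t+1` containing `0`
is the union over `μ ∈ C*` of components `K_μ` built from quasigroups `λ_μ`, then each
block vector `(0,…,0,1,1,1,0,…,0)` lies in the kernel of `C`, and consequently the
kernel has dimension at least `t = (n-1)/3`. -/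
theorem stmt_7 (t : ℕ) (Cstar : Set (Fin t → ZMod 3))
    (lam : (Fin t → ZMod 3) → (Fin t → ZMod 3) → ZMod 3)
    (hquasi : ∀ μ ∈ Cstar, ∀ (i : Fin t) (z : Fin t → ZMod 3),
      Function.Bijective fun v => lam μ (Function.update z i v))
    (C : Set (Fin (3 * t + 1) → ZMod 3))
    (hC : C = ⋃ μ ∈ Cstar, muComponent t μ (lam μ))
    (h0 : (0 : Fin (3 * t + 1) → ZMod 3) ∈ C)
    (hperf : ∀ x : Fin (3 * t + 1) → ZMod 3, ∃! c, c ∈ C ∧ hammingDist x c ≤ 1) :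
    (∀ j : Fin t, (fun c => blockVec t j + c) '' C = C) ∧
      t ≤ Module.finrank (ZMod 3)
        (Submodule.span (ZMod 3)
          {v : Fin (3 * t + 1) → ZMod 3 | (fun c => v + c) '' C = C}) := by
  have key : ∀ (j : Fin t), ∀ x ∈ C, blockVec t j + x ∈ C := by
    intro j x hx
    rw [hC] at hx ⊢
    simp only [Set.mem_iUnion] at hx ⊢
    obtain ⟨μ, hμ, hxm⟩ := hx
    exact ⟨μ, hμ, block_add_mem t j μ (lam μ) x hxm⟩
  have h3 : ∀ (j : Fin t) (x : Fin (3 * t + 1) → ZMod 3),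
      blockVec t j + (blockVec t j + (blockVec t j + x)) = x := by
    intro j x
    funext k
    simp only [Pi.add_apply, blockVec]
    split
    · have : ∀ a : ZMod 3, 1 + (1 + (1 + a)) = a := by decide
      apply this
    · simp
  have hker : ∀ j : Fin t, (fun c => blockVec t j + c) '' C = C := by
    intro j
    ext x
    constructor
    · rintro ⟨y, hy, rfl⟩; exact key j y hy
    · intro hx
      exact ⟨blockVec t j + (blockVec t j + x), key j _ (key j _ hx), h3 j x⟩
  refine ⟨hker, ?_⟩
  have heval : ∀ (i j : Fin t), blockVec t j ⟨3 * i.1, by have := i.2; omega⟩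
      = if j = i then 1 else 0 := by
    intro i j
    simp only [blockVec]
    by_cases h : j = i
    · subst h; rw [if_pos (by omega), if_pos rfl]
    · have h' : j.1 ≠ i.1 := fun hc => h (Fin.ext hc)
      rw [if_neg (by omega), if_neg h]
  have hli : LinearIndependent (ZMod 3) (blockVec t) := by
    rw [Fintype.linearIndependent_iff]
    intro g hg i
    have := congrFun hg ⟨3 * i.1, by have := i.2; omega⟩
    simp only [Finset.sum_apply, Pi.smul_apply, Pi.zero_apply, smul_eq_mul] at this
    rw [Finset.sum_eq_single i] at this
    · rwa [heval i i, if_pos rfl, mul_one] at this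
    · intro j _ hji
      rw [heval i j, if_neg hji, mul_zero]
    · intro h; exact absurd (Finset.mem_univ i) h
  calc t = Fintype.card (Fin t) := (Fintype.card_fin t).symm
    _ = Module.finrank (ZMod 3)
        (Submodule.span (ZMod 3) (Set.range (blockVec t))) :=
      (finrank_span_eq_card hli).symm
    _ ≤ _ := Submodule.finrank_mono
        (Submodule.span_mono (Set.range_subset_iff.mpr hker))
end

section
/- Let K_μ ⊆ F_3^n be defined by K_μ = {(x_0,...,x_{n-1}) : x_{3j+2} = μ_j - x_{3j} - x_{3j+1} for j = 0,...,(n-4)/3, and x_{n-1} = λ(x_1-x_0, x_4-x_3, ..., x_{n-3}-x_{n-4})} where λ is an (n-1)/3-ary quasigroup of order 3. Then K_μ is a code of minimum Hamming distance at least 3 and size 3^{2(n-1)/3}. -/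
private lemma three_le_hd {n : ℕ} {x y : Fin n → ZMod 3} {i1 i2 i3 : Fin n}
    (h12 : i1 ≠ i2) (h13 : i1 ≠ i3) (h23 : i2 ≠ i3)
    (d1 : x i1 ≠ y i1) (d2 : x i2 ≠ y i2) (d3 : x i3 ≠ y i3) :
    3 ≤ hammingDist x y := by
  have hdef : hammingDist x y = (Finset.univ.filter fun i => x i ≠ y i).card := rfl
  have hsub : ({i1, i2, i3} : Finset (Fin n)) ⊆ Finset.univ.filter fun i => x i ≠ y i := by
    intro i hi
    simp only [Finset.mem_insert, Finset.mem_singleton] at hi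
    simp only [Finset.mem_filter, Finset.mem_univ, true_and]
    rcases hi with h | h | h <;> subst h <;> assumption
  have hcard : ({i1, i2, i3} : Finset (Fin n)).card = 3 := by
    rw [Finset.card_insert_of_notMem (by simp [h12, h13]),
      Finset.card_insert_of_notMem (by simp [h23]), Finset.card_singleton]
  rw [hdef]
  exact le_trans (le_of_eq hcard.symm) (Finset.card_le_card hsub)

private def Phi (t : ℕ) (μ : Fin t → ZMod 3) (lam : (Fin t → ZMod 3) → ZMod 3)
    (p : (Fin t → ZMod 3) × (Fin t → ZMod 3)) : Fin (3 * t + 1) → ZMod 3 :=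
  fun i =>
    if h : i.1 < 3 * t then
      if i.1 % 3 = 0 then p.1 ⟨i.1 / 3, by omega⟩
      else if i.1 % 3 = 1 then p.2 ⟨i.1 / 3, by omega⟩
      else μ ⟨i.1 / 3, by omega⟩ - p.1 ⟨i.1 / 3, by omega⟩ - p.2 ⟨i.1 / 3, by omega⟩
    else lam (fun k => p.2 k - p.1 k)

private lemma Phi_idx0 {t : ℕ} {μ : Fin t → ZMod 3} {lam : (Fin t → ZMod 3) → ZMod 3}
    (p : (Fin t → ZMod 3) × (Fin t → ZMod 3)) (j : Fin t) :
    Phi t μ lam p ⟨3 * j.1, by have := j.2; omega⟩ = p.1 j := by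
  have hj := j.2
  rw [Phi, dif_pos (show 3 * j.1 < 3 * t by omega),
    if_pos (show (3 * j.1) % 3 = 0 by omega)]
  exact congrArg p.1 (Fin.ext (show 3 * j.1 / 3 = j.1 by omega))

private lemma Phi_idx1 {t : ℕ} {μ : Fin t → ZMod 3} {lam : (Fin t → ZMod 3) → ZMod 3}
    (p : (Fin t → ZMod 3) × (Fin t → ZMod 3)) (j : Fin t) :
    Phi t μ lam p ⟨3 * j.1 + 1, by have := j.2; omega⟩ = p.2 j := by
  have hj := j.2
  rw [Phi, dif_pos (show 3 * j.1 + 1 < 3 * t by omega),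
    if_neg (show ¬(3 * j.1 + 1) % 3 = 0 by omega),
    if_pos (show (3 * j.1 + 1) % 3 = 1 by omega)]
  exact congrArg p.2 (Fin.ext (show (3 * j.1 + 1) / 3 = j.1 by omega))

private lemma Phi_idx2 {t : ℕ} {μ : Fin t → ZMod 3} {lam : (Fin t → ZMod 3) → ZMod 3}
    (p : (Fin t → ZMod 3) × (Fin t → ZMod 3)) (j : Fin t) :
    Phi t μ lam p ⟨3 * j.1 + 2, by have := j.2; omega⟩ = μ j - p.1 j - p.2 j := by
  have hj := j.2
  rw [Phi, dif_pos (show 3 * j.1 + 2 < 3 * t by omega),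
    if_neg (show ¬(3 * j.1 + 2) % 3 = 0 by omega),
    if_neg (show ¬(3 * j.1 + 2) % 3 = 1 by omega)]
  have hidx : (⟨(3 * j.1 + 2) / 3, by omega⟩ : Fin t) = j :=
    Fin.ext (show (3 * j.1 + 2) / 3 = j.1 by omega)
  rw [hidx]

private lemma Phi_last {t : ℕ} {μ : Fin t → ZMod 3} {lam : (Fin t → ZMod 3) → ZMod 3}
    (p : (Fin t → ZMod 3) × (Fin t → ZMod 3)) :
    Phi t μ lam p ⟨3 * t, by omega⟩ = lam (fun k => p.2 k - p.1 k) := by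
  rw [Phi, dif_neg (show ¬(3 * t < 3 * t) by omega)]

private lemma Phi_mem {t : ℕ} {μ : Fin t → ZMod 3} {lam : (Fin t → ZMod 3) → ZMod 3}
    (p : (Fin t → ZMod 3) × (Fin t → ZMod 3)) :
    Phi t μ lam p ∈ muComponent t μ lam := by
  constructor
  · intro j
    rw [Phi_idx0, Phi_idx1, Phi_idx2]
  · rw [Phi_last]
    congr 1
    funext k
    rw [Phi_idx0, Phi_idx1]

private def muEquiv (t : ℕ) (μ : Fin t → ZMod 3) (lam : (Fin t → ZMod 3) → ZMod 3) :
    (muComponent t μ lam) ≃ (Fin t → ZMod 3) × (Fin t → ZMod 3) where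
  toFun x := (fun j => x.1 ⟨3 * j.1, by have := j.2; omega⟩,
              fun j => x.1 ⟨3 * j.1 + 1, by have := j.2; omega⟩)
  invFun p := ⟨Phi t μ lam p, Phi_mem p⟩
  left_inv := by
    rintro ⟨x, hx1, hx2⟩
    apply Subtype.ext
    funext i
    show Phi t μ lam _ i = x i
    by_cases h : i.1 < 3 * t
    · set j : Fin t := ⟨i.1 / 3, by omega⟩ with hjdef
      have hr : i.1 % 3 = 0 ∨ i.1 % 3 = 1 ∨ i.1 % 3 = 2 := by omega
      rcases hr with hr | hr | hr
      · have hi : i = ⟨3 * j.1, by have := j.2; omega⟩ := Fin.ext (by simp [hjdef]; omega)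
        rw [hi, Phi_idx0]
      · have hi : i = ⟨3 * j.1 + 1, by have := j.2; omega⟩ := Fin.ext (by simp [hjdef]; omega)
        rw [hi, Phi_idx1]
      · have hi : i = ⟨3 * j.1 + 2, by have := j.2; omega⟩ := Fin.ext (by simp [hjdef]; omega)
        rw [hi, Phi_idx2]
        exact (hx1 j).symm
    · have hi : i = ⟨3 * t, by omega⟩ := Fin.ext (show i.1 = 3 * t by have := i.2; omega)
      rw [hi, Phi_last]
      exact hx2.symm
  right_inv := by
    intro p
    refine Prod.ext ?_ ?_
    · funext j; exact Phi_idx0 p j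
    · funext j; exact Phi_idx1 p j

/-- If `λ` is a `t`-ary quasigroup of order 3 (`t = (n-1)/3`), then `K_μ`
is a code with minimum Hamming distance at least 3 and size `3^{2t} = 3^{2(n-1)/3}`. -/
theorem stmt_8 (t : ℕ) (μ : Fin t → ZMod 3)
    (lam : (Fin t → ZMod 3) → ZMod 3)
    (hquasi : ∀ (i : Fin t) (z : Fin t → ZMod 3),
      Function.Bijective fun v => lam (Function.update z i v)) :
    (∀ x ∈ muComponent t μ lam, ∀ y ∈ muComponent t μ lam,
        x ≠ y → 3 ≤ hammingDist x y) ∧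
      Nat.card (muComponent t μ lam) = 3 ^ (2 * t) := by
  constructor
  · intro x hx y hy hxy
    obtain ⟨hx1, hx2⟩ := hx
    obtain ⟨hy1, hy2⟩ := hy
    have zfact1 : ∀ m a b b' : ZMod 3, b ≠ b' → m - a - b ≠ m - a - b' := by decide
    have zfact2 : ∀ m a a' b : ZMod 3, a ≠ a' → m - a - b ≠ m - a' - b := by decide
    have zfact3 : ∀ a a' b b' : ZMod 3, b - a = b' - a' → (a ≠ a' ∨ b ≠ b') →
        a ≠ a' ∧ b ≠ b' := by decide
    have zfact4 : ∀ m a a' b b' : ZMod 3, b - a = b' - a' → a ≠ a' →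
        m - a - b ≠ m - a' - b' := by decide
    have block2 : ∀ k : Fin t,
        (x ⟨3 * k.1, by have := k.2; omega⟩ ≠ y ⟨3 * k.1, by have := k.2; omega⟩ ∨
         x ⟨3 * k.1 + 1, by have := k.2; omega⟩ ≠ y ⟨3 * k.1 + 1, by have := k.2; omega⟩) →
        ∃ u v : Fin (3 * t + 1), u ≠ v ∧ 3 * k.1 ≤ u.1 ∧ u.1 < 3 * k.1 + 3 ∧
          3 * k.1 ≤ v.1 ∧ v.1 < 3 * k.1 + 3 ∧ x u ≠ y u ∧ x v ≠ y v := by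
      intro k hk
      by_cases ha : x ⟨3 * k.1, by have := k.2; omega⟩ = y ⟨3 * k.1, by have := k.2; omega⟩
      · have hb : x ⟨3 * k.1 + 1, by have := k.2; omega⟩ ≠
            y ⟨3 * k.1 + 1, by have := k.2; omega⟩ := hk.resolve_left (not_not_intro ha)
        refine ⟨⟨3 * k.1 + 1, by have := k.2; omega⟩, ⟨3 * k.1 + 2, by have := k.2; omega⟩,
          Fin.ne_of_val_ne (show 3 * k.1 + 1 ≠ 3 * k.1 + 2 by omega),
          show 3 * k.1 ≤ 3 * k.1 + 1 by omega, show 3 * k.1 + 1 < 3 * k.1 + 3 by omega,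
          show 3 * k.1 ≤ 3 * k.1 + 2 by omega, show 3 * k.1 + 2 < 3 * k.1 + 3 by omega,
          hb, ?_⟩
        rw [hx1 k, hy1 k, ha]
        exact zfact1 _ _ _ _ hb
      · by_cases hb : x ⟨3 * k.1 + 1, by have := k.2; omega⟩ =
            y ⟨3 * k.1 + 1, by have := k.2; omega⟩
        · refine ⟨⟨3 * k.1, by have := k.2; omega⟩, ⟨3 * k.1 + 2, by have := k.2; omega⟩,
            Fin.ne_of_val_ne (show 3 * k.1 ≠ 3 * k.1 + 2 by omega),
            show 3 * k.1 ≤ 3 * k.1 by omega, show 3 * k.1 < 3 * k.1 + 3 by omega,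
            show 3 * k.1 ≤ 3 * k.1 + 2 by omega, show 3 * k.1 + 2 < 3 * k.1 + 3 by omega,
            ha, ?_⟩
          rw [hx1 k, hy1 k, hb]
          exact zfact2 _ _ _ _ ha
        · exact ⟨⟨3 * k.1, by have := k.2; omega⟩, ⟨3 * k.1 + 1, by have := k.2; omega⟩,
            Fin.ne_of_val_ne (show 3 * k.1 ≠ 3 * k.1 + 1 by omega),
            show 3 * k.1 ≤ 3 * k.1 by omega, show 3 * k.1 < 3 * k.1 + 3 by omega,
            show 3 * k.1 ≤ 3 * k.1 + 1 by omega, show 3 * k.1 + 1 < 3 * k.1 + 3 by omega,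
            ha, hb⟩
    by_cases hall : ∀ j : Fin t,
        x ⟨3 * j.1, by have := j.2; omega⟩ = y ⟨3 * j.1, by have := j.2; omega⟩ ∧
        x ⟨3 * j.1 + 1, by have := j.2; omega⟩ = y ⟨3 * j.1 + 1, by have := j.2; omega⟩
    · exfalso
      apply hxy
      funext i
      by_cases h : i.1 < 3 * t
      · set j : Fin t := ⟨i.1 / 3, by omega⟩ with hjdef
        rcases (show i.1 % 3 = 0 ∨ i.1 % 3 = 1 ∨ i.1 % 3 = 2 by omega) with hr | hr | hr
        · have hi : i = ⟨3 * j.1, by have := j.2; omega⟩ :=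
            Fin.ext (show i.1 = 3 * j.1 by simp [hjdef]; omega)
          rw [hi]; exact (hall j).1
        · have hi : i = ⟨3 * j.1 + 1, by have := j.2; omega⟩ :=
            Fin.ext (show i.1 = 3 * j.1 + 1 by simp [hjdef]; omega)
          rw [hi]; exact (hall j).2
        · have hi : i = ⟨3 * j.1 + 2, by have := j.2; omega⟩ :=
            Fin.ext (show i.1 = 3 * j.1 + 2 by simp [hjdef]; omega)
          rw [hi, hx1 j, hy1 j, (hall j).1, (hall j).2]
      · have hi : i = ⟨3 * t, by omega⟩ := Fin.ext (show i.1 = 3 * t by have := i.2; omega)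
        rw [hi, hx2, hy2]
        congr 1
        funext k
        rw [(hall k).1, (hall k).2]
    · obtain ⟨j, hj⟩ := not_forall.mp hall
      rw [not_and_or] at hj
      by_cases h2 : ∃ k : Fin t, k ≠ j ∧
          (x ⟨3 * k.1, by have := k.2; omega⟩ ≠ y ⟨3 * k.1, by have := k.2; omega⟩ ∨
           x ⟨3 * k.1 + 1, by have := k.2; omega⟩ ≠ y ⟨3 * k.1 + 1, by have := k.2; omega⟩)
      · obtain ⟨k, hkj, hk⟩ := h2
        obtain ⟨u, v, huv, hu1, hu2, hv1, hv2, hdu, hdv⟩ := block2 j hj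
        obtain ⟨w, _, _, hw1, hw2, _, _, hdw, _⟩ := block2 k hk
        have hjk : j.1 ≠ k.1 := fun h => hkj (Fin.ext h.symm)
        exact three_le_hd huv (Fin.ne_of_val_ne (by omega)) (Fin.ne_of_val_ne (by omega))
          hdu hdv hdw
      · push_neg at h2
        obtain ⟨u, v, huv, hu1, hu2, hv1, hv2, hdu, hdv⟩ := block2 j hj
        by_cases hd : x ⟨3 * j.1 + 1, by have := j.2; omega⟩ - x ⟨3 * j.1, by have := j.2; omega⟩
            = y ⟨3 * j.1 + 1, by have := j.2; omega⟩ - y ⟨3 * j.1, by have := j.2; omega⟩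
        · have hab := zfact3 _ _ _ _ hd hj
          have hc : x ⟨3 * j.1 + 2, by have := j.2; omega⟩ ≠
              y ⟨3 * j.1 + 2, by have := j.2; omega⟩ := by
            rw [hx1 j, hy1 j]
            exact zfact4 _ _ _ _ _ hd hab.1
          exact three_le_hd
            (i1 := ⟨3 * j.1, by have := j.2; omega⟩)
            (i2 := ⟨3 * j.1 + 1, by have := j.2; omega⟩)
            (i3 := ⟨3 * j.1 + 2, by have := j.2; omega⟩)
            (Fin.ne_of_val_ne (show 3 * j.1 ≠ 3 * j.1 + 1 by omega))
            (Fin.ne_of_val_ne (show 3 * j.1 ≠ 3 * j.1 + 2 by omega))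
            (Fin.ne_of_val_ne (show 3 * j.1 + 1 ≠ 3 * j.1 + 2 by omega))
            hab.1 hab.2 hc
        · have hlast : x ⟨3 * t, by omega⟩ ≠ y ⟨3 * t, by omega⟩ := by
            rw [hx2, hy2]
            intro hcontra
            apply hd
            set dx : Fin t → ZMod 3 := fun k =>
              x ⟨3 * k.1 + 1, by have := k.2; omega⟩ - x ⟨3 * k.1, by have := k.2; omega⟩
              with hdx
            have hupd : (fun k : Fin t =>
                y ⟨3 * k.1 + 1, by have := k.2; omega⟩ - y ⟨3 * k.1, by have := k.2; omega⟩) =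
                Function.update dx j
                  (y ⟨3 * j.1 + 1, by have := j.2; omega⟩ -
                    y ⟨3 * j.1, by have := j.2; omega⟩) := by
              funext k
              by_cases hkj : k = j
              · subst hkj; rw [Function.update_self]
              · rw [Function.update_of_ne hkj]
                show y ⟨3 * k.1 + 1, by have := k.2; omega⟩ - y ⟨3 * k.1, by have := k.2; omega⟩
                  = x ⟨3 * k.1 + 1, by have := k.2; omega⟩ - x ⟨3 * k.1, by have := k.2; omega⟩
                rw [(h2 k hkj).1, (h2 k hkj).2]
            rw [hupd] at hcontra
            have h1 : lam (Function.update dx j (dx j)) =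
                lam (Function.update dx j
                  (y ⟨3 * j.1 + 1, by have := j.2; omega⟩ -
                    y ⟨3 * j.1, by have := j.2; omega⟩)) := by
              rw [Function.update_eq_self]; exact hcontra
            exact (hquasi j dx).1 h1
          have hjt := j.2
          exact three_le_hd huv (Fin.ne_of_val_ne (show u.1 ≠ 3 * t by omega))
            (Fin.ne_of_val_ne (show v.1 ≠ 3 * t by omega)) hdu hdv hlast
  · rw [Nat.card_congr (muEquiv t μ lam), Nat.card_eq_fintype_card]
    simp [two_mul, pow_add]
end

section
/- Let n' = (q^{m-1}-1)/(q-1), n'' = q^{m-1}, and n = (q^m-1)/(q-1) = n'' + n'. Suppose (P_0,...,P_{n''-1}) is a partition of F_q^{n'} into 1-perfect codes, (C_0,...,C_{n''-1}) is a partition of a distance-2 MDS code M ⊆ F_q^{n''} (|M| = q^{n''-1}, minimum distance 2) into codes each of size q^{n''-m} and minimum distance 3, and τ is a permutation of {0,...,n''-1}. Then the concatenated code P = ∪_{i} { c·p : c ∈ C_i, p ∈ P_{τ(i)} } (concatenation of words) is a 1-perfect code in H(n,q). -/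
lemma dist_append_aux {n₁ n₂ q : ℕ} (x : Fin (n₁ + n₂) → Fin q)
    (c : Fin n₁ → Fin q) (p : Fin n₂ → Fin q) :
    hammingDist x (Fin.append c p) =
      hammingDist (fun i => x (Fin.castAdd n₂ i)) c +
      hammingDist (fun i => x (Fin.natAdd n₁ i)) p := by
  simp only [hammingDist, Finset.card_filter, Fin.sum_univ_add, Fin.append_left, Fin.append_right]

lemma dist_le_one_aux {n q : ℕ} (x c : Fin n → Fin q) (j : Fin n)
    (h : ∀ k, k ≠ j → c k = x k) : hammingDist x c ≤ 1 := by
  have : (Finset.univ.filter fun i => x i ≠ c i) ⊆ {j} := by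
    intro k hk
    simp only [Finset.mem_filter, Finset.mem_univ, true_and] at hk
    simp only [Finset.mem_singleton]
    by_contra hkj
    exact hk ((h k hkj).symm)
  calc hammingDist x c = (Finset.univ.filter fun i => x i ≠ c i).card := rfl
    _ ≤ ({j} : Finset (Fin n)).card := Finset.card_le_card this
    _ = 1 := Finset.card_singleton j

lemma punct_aux {n q : ℕ} (M : Set (Fin n → Fin q)) (hcard : M.ncard = q ^ (n - 1))
    (hdist : ∀ x ∈ M, ∀ y ∈ M, x ≠ y → 2 ≤ hammingDist x y)
    (j : Fin n) (x : Fin n → Fin q) :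
    ∃ c ∈ M, ∀ k, k ≠ j → c k = x k := by
  set F : M → ({k : Fin n // k ≠ j} → Fin q) := fun c k => c.1 k.1 with hF
  have hinj : Function.Injective F := by
    intro a b hab
    have hagree : ∀ k, k ≠ j → a.1 k = b.1 k := fun k hk => congrFun hab ⟨k, hk⟩
    ext1
    by_contra hne
    have h1 : hammingDist a.1 b.1 ≤ 1 := (hammingDist_comm a.1 b.1) ▸ dist_le_one_aux b.1 a.1 j hagree
    have := hdist a.1 a.2 b.1 b.2 hne
    omega
  have hcard2 : Nat.card M = Nat.card ({k : Fin n // k ≠ j} → Fin q) := by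
    rw [Nat.card_eq_fintype_card (α := ({k : Fin n // k ≠ j} → Fin q))]
    rw [Nat.card_coe_set_eq, hcard, Fintype.card_fun, Fintype.card_fin]
    congr 1
    rw [Fintype.card_subtype_compl, Fintype.card_subtype_eq, Fintype.card_fin]
  have hbij : Function.Bijective F :=
    (Nat.bijective_iff_injective_and_card F).2 ⟨hinj, hcard2⟩
  obtain ⟨c, hc⟩ := hbij.2 (fun k => x k.1)
  exact ⟨c.1, c.2, fun k hk => congrFun hc ⟨k, hk⟩⟩

/-- Romanov's concatenation lemma: from a partition of `F_q^{n'}` into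
1-perfect codes, a partition of a distance-2 MDS code in `F_q^{n''}` (`n'' = q^{m-1}`)
into `(n'', q^{n''-m}, 3)_q` codes, and a permutation `τ`, the concatenated code
`P = ⋃_i C_i P_{τ(i)}` is a 1-perfect code in `H(n,q)`, `n = n'' + n'`. -/
theorem stmt_9 (q m n' : ℕ) (hq : IsPrimePow q) (hm : 2 ≤ m)
    (hn' : (q - 1) * n' + 1 = q ^ (m - 1))
    (P : Fin (q ^ (m - 1)) → Set (Fin n' → Fin q))
    (hPperf : ∀ i, ∀ x : Fin n' → Fin q, ∃! c, c ∈ P i ∧ hammingDist x c ≤ 1)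
    (hPpart : ∀ x : Fin n' → Fin q, ∃! i, x ∈ P i)
    (M : Set (Fin (q ^ (m - 1)) → Fin q))
    (hMcard : M.ncard = q ^ (q ^ (m - 1) - 1))
    (hMdist : ∀ x ∈ M, ∀ y ∈ M, x ≠ y → 2 ≤ hammingDist x y)
    (C : Fin (q ^ (m - 1)) → Set (Fin (q ^ (m - 1)) → Fin q))
    (hCdisj : ∀ i j, i ≠ j → Disjoint (C i) (C j))
    (hCunion : (⋃ i, C i) = M)
    (hCcard : ∀ i, (C i).ncard = q ^ (q ^ (m - 1) - m))
    (hCdist : ∀ i, ∀ x ∈ C i, ∀ y ∈ C i, x ≠ y → 3 ≤ hammingDist x y)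
    (τ : Equiv.Perm (Fin (q ^ (m - 1)))) :
    ∀ x : Fin (q ^ (m - 1) + n') → Fin q,
      ∃! w, (∃ i, ∃ c ∈ C i, ∃ p ∈ P (τ i), w = Fin.append c p) ∧
        hammingDist x w ≤ 1 := by
  intro x
  set x2 : Fin (q ^ (m - 1)) → Fin q := fun j => x (Fin.castAdd n' j) with hx2
  set x1 : Fin n' → Fin q := fun k => x (Fin.natAdd (q ^ (m - 1)) k) with hx1
  have hd : ∀ (c : Fin (q ^ (m - 1)) → Fin q) (p : Fin n' → Fin q),
      hammingDist x (Fin.append c p) = hammingDist x2 c + hammingDist x1 p :=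
    fun c p => dist_append_aux x c p
  have hMmem : ∀ {c}, (∃ i, c ∈ C i) ↔ c ∈ M := by
    intro c; rw [← hCunion]; exact Set.mem_iUnion.symm
  by_cases hxM : x2 ∈ M
  · -- Case A: x2 ∈ M
    obtain ⟨i₀, hi₀⟩ := hMmem.2 hxM
    obtain ⟨p₀, ⟨hp₀P, hp₀d⟩, hp₀u⟩ := hPperf (τ i₀) x1
    refine ⟨Fin.append x2 p₀, ⟨⟨i₀, x2, hi₀, p₀, hp₀P, rfl⟩, ?_⟩, ?_⟩
    · rw [hd, hammingDist_self]; omega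
    · rintro w ⟨⟨i, c, hcC, p, hpP, rfl⟩, hwd⟩
      rw [hd] at hwd
      have hcM : c ∈ M := hMmem.1 ⟨i, hcC⟩
      have hcx : c = x2 := by
        by_contra hne
        have h2 := hMdist x2 hxM c hcM (Ne.symm hne)
        omega
      subst hcx
      have hii : i = i₀ := by
        by_contra hne
        exact Set.disjoint_left.1 (hCdisj i i₀ hne) hcC hi₀ |>.elim
      subst hii
      have hp : p = p₀ := by
        apply hp₀u
        refine ⟨hpP, ?_⟩
        rw [hammingDist_self] at hwd; omega
      rw [hp]
  · -- Case B: x2 ∉ M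
    have hcs : ∀ j : Fin (q ^ (m - 1)),
        ∃ c, c ∈ M ∧ ∀ k, k ≠ j → c k = x2 k := by
      intro j
      obtain ⟨c, hcM, hcag⟩ := punct_aux M hMcard hMdist j x2
      exact ⟨c, hcM, hcag⟩
    choose cf hcfM hcfag using hcs
    have hcfi : ∀ j, ∃ i, cf j ∈ C i := fun j => hMmem.2 (hcfM j)
    choose σ hσ using hcfi
    have hcfne : ∀ j, cf j ≠ x2 := fun j h => hxM (h ▸ hcfM j)
    have hcfdiff : ∀ j, cf j j ≠ x2 j := by
      intro j h
      apply hcfne j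
      funext k
      by_cases hk : k = j
      · rw [hk]; exact h
      · exact hcfag j k hk
    have hcfd1 : ∀ j, hammingDist x2 (cf j) ≤ 1 :=
      fun j => dist_le_one_aux x2 (cf j) j (hcfag j)
    have hσinj : Function.Injective σ := by
      intro j j' hjj
      by_contra hne
      have hcfnn : cf j ≠ cf j' := by
        intro h
        apply hcfdiff j'
        rw [← h, hcfag j j' (Ne.symm hne)]
      have h3 := hCdist (σ j) (cf j) (hσ j) (cf j') (hjj ▸ hσ j') hcfnn
      have htri : hammingDist (cf j) (cf j') ≤
          hammingDist (cf j) x2 + hammingDist x2 (cf j') :=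
        hammingDist_triangle _ _ _
      have h1 : hammingDist (cf j) x2 ≤ 1 := (hammingDist_comm (cf j) x2) ▸ hcfd1 j
      have h2 := hcfd1 j'
      omega
    have hσsurj : Function.Surjective σ := Finite.injective_iff_surjective.1 hσinj
    obtain ⟨i₁, hi₁P, hi₁u⟩ := hPpart x1
    obtain ⟨j₀, hj₀⟩ := hσsurj (τ.symm i₁)
    have hcfC : cf j₀ ∈ C (τ.symm i₁) := hj₀ ▸ hσ j₀
    have hx1P : x1 ∈ P (τ (τ.symm i₁)) := by rw [Equiv.apply_symm_apply]; exact hi₁P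
    refine ⟨Fin.append (cf j₀) x1, ⟨⟨τ.symm i₁, cf j₀, hcfC, x1, hx1P, rfl⟩, ?_⟩, ?_⟩
    · rw [hd, hammingDist_self]
      have := hcfd1 j₀; omega
    · rintro w ⟨⟨i, c, hcC, p, hpP, rfl⟩, hwd⟩
      rw [hd] at hwd
      have hcM : c ∈ M := hMmem.1 ⟨i, hcC⟩
      have hcx2 : c ≠ x2 := fun h => hxM (h ▸ hcM)
      have hd2 : hammingDist x2 c ≠ 0 := by
        intro h
        exact hcx2 (hammingDist_eq_zero.1 h).symm
      have hpx1 : p = x1 := (hammingDist_eq_zero.1 (by omega)).symm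
      subst hpx1
      have hti : τ i = i₁ := hi₁u (τ i) hpP
      have hii : i = τ.symm i₁ := by rw [← hti, Equiv.symm_apply_apply]
      subst hii
      have hcc : c = cf j₀ := by
        by_contra hne
        have h3 := hCdist (τ.symm i₁) c hcC (cf j₀) hcfC hne
        have htri : hammingDist c (cf j₀) ≤
            hammingDist c x2 + hammingDist x2 (cf j₀) := hammingDist_triangle _ _ _
        have h1 : hammingDist c x2 ≤ 1 := by
          rw [hammingDist_comm]; omega
        have h2 := hcfd1 j₀
        omega
      rw [hcc]
end

section
/- There are exactly 72 ternary 1-perfect codes of length 4 in F_3^4 (i.e., sets of 9 words that are pairwise at distance ≥ 3 such that every word of F_3^4 is within distance 1 of exactly one codeword). -/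
/-!
Translating a perfect code by its unique codeword next to `0` gives a perfect code through `0`,
so the number of perfect codes is `9 · N₀`, where `N₀` counts those containing `0`.

Let `D ∋ 0` be perfect. A codeword `d` without zero coordinates is impossible: the word
`(d₀, d₁, 0, 0)` is covered by a codeword of weight `≥ 3`, which must then agree with `d` on the
first two coordinates and lie at distance `≤ 2` from `d`. So every nonzero codeword has exactly one
zero coordinate, two codewords with the same zero coordinate are negatives of each other, and as
there are eight nonzero codewords, `D = {0, ±a 0, ±a 1, ±a 2, ±a 3}` with `a j` vanishing exactly
at `j`. A finite check over the `4⁴` sign-normalized choices of `a` leaves `N₀ = 8`.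
-/

open Finset

section Hamming

variable {ι β : Type*} [Fintype ι] [DecidableEq β]

theorem two_le_hammingDist {x y : ι → β} {i j : ι} (hij : i ≠ j) (hi : x i ≠ y i)
    (hj : x j ≠ y j) : 2 ≤ hammingDist x y :=
  one_lt_card.2 ⟨i, by simpa using hi, j, by simpa using hj, hij⟩

theorem hammingDist_le_card_compl [DecidableEq ι] {x y : ι → β} {s : Finset ι}
    (h : ∀ i ∈ s, x i = y i) : hammingDist x y ≤ #sᶜ :=
  card_le_card fun i hi => mem_compl.2 fun his => (mem_filter.1 hi).2 (h i his)

theorem eq_of_hammingDist_le_one {C : Finset (ι → β)}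
    (hC : ∀ c ∈ C, ∀ c' ∈ C, c ≠ c' → 3 ≤ hammingDist c c') {x c c' : ι → β}
    (hc : c ∈ C) (hc' : c' ∈ C) (hxc : hammingDist x c ≤ 1) (hxc' : hammingDist x c' ≤ 1) :
    c = c' := by
  by_contra hne
  have := hC c hc c' hc' hne
  have := hammingDist_triangle_left c c' x
  omega

theorem existsUnique_hammingDist_le_one_of_card_mul [DecidableEq ι] [Fintype β]
    {C : Finset (ι → β)} {m : ℕ}
    (hC : ∀ c ∈ C, ∀ c' ∈ C, c ≠ c' → 3 ≤ hammingDist c c')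
    (hball : ∀ c : ι → β, #{x | hammingDist x c ≤ 1} = m)
    (hcard : #C * m = Fintype.card (ι → β)) (x : ι → β) :
    ∃! c, c ∈ C ∧ hammingDist x c ≤ 1 := by
  let ball (c : ι → β) : Finset (ι → β) := {y | hammingDist y c ≤ 1}
  have hdisj : (C : Set (ι → β)).PairwiseDisjoint ball :=
    fun c hc c' hc' hne => disjoint_left.2 fun y hy hy' =>
      hne (eq_of_hammingDist_le_one hC hc hc' (mem_filter.1 hy).2 (mem_filter.1 hy').2)
  have hcover : C.biUnion ball = univ :=
    eq_univ_of_card _ (by rw [card_biUnion hdisj, sum_const_nat fun c _ => hball c, hcard])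
  obtain ⟨c, hc, hxc⟩ := mem_biUnion.1 (hcover ▸ mem_univ x)
  have hxc := (mem_filter.1 hxc).2
  exact ⟨c, ⟨hc, hxc⟩, fun c' h => eq_of_hammingDist_le_one hC h.1 hc h.2 hxc⟩

theorem eqOn_of_hammingDist_le_one [Zero β] {c u : ι → β} {s : Finset ι}
    (hcu : hammingDist c u ≤ 1) (hu : ∀ i ∉ s, u i = 0) (hc : #s < hammingNorm c) :
    ∀ i ∈ s, c i = u i := by
  intro i hi
  by_contra hne
  have hout : ∀ j ∉ s, c j = u j := by
    intro j hj
    by_contra hne'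
    have := two_le_hammingDist (fun h : i = j => hj (h ▸ hi)) hne hne'
    omega
  have : hammingNorm c ≤ #s := card_le_card fun j hj => by
    by_contra hjs
    exact (mem_filter.1 hj).2 ((hout j hjs).trans (hu j hjs))
  omega

theorem hammingNorm_eq_card_sub_one [Zero β] {w : ι → β} {j : ι} (hw : ∀ i, w i = 0 ↔ i = j) :
    hammingNorm w = Fintype.card ι - 1 := by
  classical
  have : ({i | w i ≠ 0} : Finset ι) = univ.erase j := by
    ext i
    simp [hw]
  rw [hammingNorm, this, card_erase_of_mem (mem_univ j), card_univ]

end Hamming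

section Translation

variable {ι β : Type*} [Fintype ι] [DecidableEq β] [AddGroup β]

theorem hammingDist_add_right (x y v : ι → β) : hammingDist (x + v) (y + v) = hammingDist x y :=
  hammingDist_comp (fun i b => b + v i) fun i => add_left_injective (v i)

theorem hammingDist_neg_neg (x y : ι → β) : hammingDist (-x) (-y) = hammingDist x y :=
  hammingDist_comp (fun _ b => -b) fun _ => neg_injective

theorem card_filter_hammingDist_le [DecidableEq ι] [Fintype β] (c : ι → β) (r : ℕ) :
    #{x | hammingDist x c ≤ r} = #{x : ι → β | hammingNorm x ≤ r} :=
  card_equiv ((Equiv.neg _).trans (Equiv.addRight c)) fun x => by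
    simp [hammingDist_eq_hammingNorm]

theorem le_hammingDist_map_addRight {C : Finset (ι → β)} {d : ℕ}
    (hC : ∀ c ∈ C, ∀ c' ∈ C, c ≠ c' → d ≤ hammingDist c c') (v : ι → β) :
    ∀ c ∈ C.map (addRightEmbedding v), ∀ c' ∈ C.map (addRightEmbedding v), c ≠ c' →
      d ≤ hammingDist c c' := by
  simp only [mem_map, addRightEmbedding_apply]
  rintro _ ⟨c, hc, rfl⟩ _ ⟨c', hc', rfl⟩ hne
  rw [hammingDist_add_right]
  exact hC c hc c' hc' (by rintro rfl; exact hne rfl)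

theorem existsUnique_hammingDist_le_map_addRight {C : Finset (ι → β)} {r : ℕ}
    (hC : ∀ x, ∃! c, c ∈ C ∧ hammingDist x c ≤ r) (v : ι → β) (x : ι → β) :
    ∃! c, c ∈ C.map (addRightEmbedding v) ∧ hammingDist x c ≤ r := by
  obtain ⟨c, ⟨hc, hxc⟩, huniq⟩ := hC (x - v)
  refine ⟨c + v, ⟨mem_map_of_mem _ hc, ?_⟩, ?_⟩
  · rwa [← sub_add_cancel x v, hammingDist_add_right]
  · simp only [mem_map, addRightEmbedding_apply]
    rintro _ ⟨⟨c', hc', rfl⟩, hxc'⟩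
    rw [huniq c' ⟨hc', by rwa [← hammingDist_add_right _ _ v, sub_add_cancel]⟩]

theorem natCard_eq_mul_natCard_zero_mem (Q : Finset (ι → β) → Prop)
    (hQ : ∀ C v, Q C → Q (C.map (addRightEmbedding v)))
    (hcover : ∀ C, Q C → ∃! c, c ∈ C ∧ hammingDist 0 c ≤ 1) :
    Nat.card {C // Q C} =
      Nat.card {c : ι → β // hammingDist 0 c ≤ 1} * Nat.card {D // Q D ∧ 0 ∈ D} := by
  choose center hcenter using fun C : {C // Q C} => (hcover C.1 C.2).exists
  rw [← Nat.card_prod]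
  refine Nat.card_congr
    { toFun C := (⟨center C, (hcenter C).2⟩, ⟨C.1.map (addRightEmbedding (-center C)),
        hQ _ _ C.2, mem_map.2 ⟨center C, (hcenter C).1, add_neg_cancel _⟩⟩)
      invFun p := ⟨p.2.1.map (addRightEmbedding p.1.1), hQ _ _ p.2.2.1⟩
      left_inv C := Subtype.ext (by ext; simp)
      right_inv := ?_ }
  rintro ⟨⟨c, hc⟩, ⟨D, hD, h0⟩⟩
  have hcenter_eq : center ⟨D.map (addRightEmbedding c), hQ _ _ hD⟩ = c :=
    (hcover _ (hQ _ _ hD)).unique (hcenter _) ⟨mem_map.2 ⟨0, h0, zero_add c⟩, hc⟩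
  ext <;> simp [hcenter_eq]

end Translation

abbrev Word := Fin 4 → ZMod 3

theorem hammingDist_le_two {x y : Word} {i j : Fin 4} (hij : i ≠ j) (hi : x i = y i)
    (hj : x j = y j) : hammingDist x y ≤ 2 := by
  have := hammingDist_le_card_compl (s := {i, j}) (x := x) (y := y) (by simp [hi, hj])
  rwa [card_compl, card_pair hij] at this

theorem hammingNorm_eq_three {w : Word} {j : Fin 4} (hw : ∀ i, w i = 0 ↔ i = j) :
    hammingNorm w = 3 :=
  hammingNorm_eq_card_sub_one hw

def IsPerfectCode (C : Finset Word) : Prop :=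
  #C = 9 ∧ (∀ c ∈ C, ∀ c' ∈ C, c ≠ c' → 3 ≤ hammingDist c c') ∧
    ∀ x : Word, ∃! c, c ∈ C ∧ hammingDist x c ≤ 1

theorem IsPerfectCode.map_addRight {C : Finset Word} (hC : IsPerfectCode C) (v : Word) :
    IsPerfectCode (C.map (addRightEmbedding v)) :=
  ⟨(card_map _).trans hC.1, le_hammingDist_map_addRight hC.2.1 v,
    existsUnique_hammingDist_le_map_addRight hC.2.2 v⟩

theorem card_ball_zero : #{x : Word | hammingNorm x ≤ 1} = 9 := by decide

theorem IsPerfectCode.of_card_of_le_hammingDist {C : Finset Word} (hcard : #C = 9)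
    (hdist : ∀ c ∈ C, ∀ c' ∈ C, c ≠ c' → 3 ≤ hammingDist c c') : IsPerfectCode C :=
  ⟨hcard, hdist, existsUnique_hammingDist_le_one_of_card_mul hdist
    (fun c => (card_filter_hammingDist_le c 1).trans card_ball_zero) (by simp [hcard])⟩

namespace IsPerfectCode

variable {D : Finset Word}

theorem exists_eq_zero (hD : IsPerfectCode D) (h0 : 0 ∈ D) {d : Word} (hd : d ∈ D) :
    ∃ j, d j = 0 := by
  obtain ⟨-, hdist, hcover⟩ := hD
  by_contra! hne
  obtain ⟨c, ⟨hc, hcu⟩, -⟩ := hcover ![d 0, d 1, 0, 0]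
  have hc0 : c ≠ 0 := by
    rintro rfl
    have := two_le_hammingDist (x := ![d 0, d 1, 0, 0]) (y := 0) (i := 0) (j := 1) (by decide)
      (hne 0) (hne 1)
    omega
  have hcd : c ≠ d := by
    rintro rfl
    have := two_le_hammingDist (x := ![c 0, c 1, 0, 0]) (y := c) (i := 2) (j := 3) (by decide)
      (hne 2).symm (hne 3).symm
    omega
  have hweight : 3 ≤ hammingNorm c := hammingDist_zero_right c ▸ hdist c hc 0 h0 hc0
  have hagree := eqOn_of_hammingDist_le_one (s := {0, 1}) (hammingDist_comm c _ ▸ hcu)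
    (fun i hi => by fin_cases i <;> simp at hi ⊢) (by rw [card_pair (by decide)]; omega)
  have := hammingDist_le_two (x := c) (y := d) (i := 0) (j := 1) (by decide)
    (hagree 0 (by simp)) (hagree 1 (by simp))
  have := hdist c hc d hd hcd
  omega

theorem existsUnique_eq_zero (hD : IsPerfectCode D) (h0 : 0 ∈ D) {d : Word} (hd : d ∈ D)
    (hd0 : d ≠ 0) : ∃ j, ∀ i, d i = 0 ↔ i = j := by
  obtain ⟨j, hj⟩ := hD.exists_eq_zero h0 hd
  refine ⟨j, fun i => ⟨fun hi => ?_, fun h => h ▸ hj⟩⟩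
  by_contra hij
  have := hammingDist_le_two (y := 0) hij hi hj
  have := hD.2.1 d hd 0 h0 hd0
  omega

theorem zero_iff_of_mem_filter (hD : IsPerfectCode D) (h0 : 0 ∈ D) {d : Word} {j : Fin 4}
    (hd : d ∈ {d ∈ D.erase 0 | d j = 0}) : ∀ i, d i = 0 ↔ i = j := by
  obtain ⟨⟨hd0, hdD⟩, hdj⟩ := by simpa using hd
  obtain ⟨k, hk⟩ := hD.existsUnique_eq_zero h0 hdD hd0
  obtain rfl := (hk j).1 hdj
  exact hk

theorem eq_neg (hD : IsPerfectCode D) {s s' : Word} (hs : s ∈ D) (hs' : s' ∈ D) (hne : s ≠ s')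
    {j : Fin 4} (hsj : ∀ i, s i = 0 ↔ i = j) (hs'j : ∀ i, s' i = 0 ↔ i = j) : s' = -s := by
  funext i
  by_cases hij : i = j
  · simp [(hsj i).2 hij, (hs'j i).2 hij]
  · have key : ∀ a b : ZMod 3, a ≠ 0 → b ≠ 0 → a ≠ b → b = -a := by decide
    refine key _ _ (mt (hsj i).1 hij) (mt (hs'j i).1 hij) fun h => ?_
    have := hammingDist_le_two hij h (((hsj j).2 rfl).trans ((hs'j j).2 rfl).symm)
    have := hD.2.1 s hs s' hs' hne
    omega

theorem erase_zero_eq_biUnion (hD : IsPerfectCode D) (h0 : 0 ∈ D) :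
    D.erase 0 = univ.biUnion fun j => {d ∈ D.erase 0 | d j = 0} := by
  ext d
  simp only [mem_biUnion, mem_univ, true_and, mem_filter]
  exact ⟨fun hd => (hD.exists_eq_zero h0 (mem_of_mem_erase hd)).imp
    fun _ hj => ⟨hd, hj⟩, fun ⟨_, hd, _⟩ => hd⟩

theorem card_filter_eq_zero (hD : IsPerfectCode D) (h0 : 0 ∈ D) (j : Fin 4) :
    #{d ∈ D.erase 0 | d j = 0} = 2 := by
  set Z : Fin 4 → Finset Word := fun j => {d ∈ D.erase 0 | d j = 0}
  have hle : ∀ j ∈ univ, #(Z j) ≤ 2 := by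
    intro j _
    by_contra! h
    obtain ⟨a, ha, b, hb, c, hc, hab, hac, hbc⟩ := two_lt_card.1 h
    have hD' : ∀ x ∈ Z j, x ∈ D := fun x hx => mem_of_mem_erase (mem_filter.1 hx).1
    have hb' := hD.eq_neg (hD' a ha) (hD' b hb) hab (hD.zero_iff_of_mem_filter h0 ha)
      (hD.zero_iff_of_mem_filter h0 hb)
    have hc' := hD.eq_neg (hD' a ha) (hD' c hc) hac (hD.zero_iff_of_mem_filter h0 ha)
      (hD.zero_iff_of_mem_filter h0 hc)
    exact hbc (hb'.trans hc'.symm)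
  have hdisj : ((univ : Finset (Fin 4)) : Set (Fin 4)).PairwiseDisjoint Z :=
    fun j _ k _ hjk => disjoint_left.2 fun d hj hk =>
      hjk (((hD.zero_iff_of_mem_filter h0 hj) k).1 (mem_filter.1 hk).2).symm
  have hsum : ∑ j, #(Z j) = ∑ _j : Fin 4, 2 := by
    rw [← card_biUnion hdisj, ← hD.erase_zero_eq_biUnion h0, card_erase_of_mem h0, hD.1]
    rfl
  exact (sum_eq_sum_iff_of_le hle).1 hsum j (mem_univ j)

end IsPerfectCode

/-- The condition `w (j + 1) = 1` picks one word out of each pair `±w`. -/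
def normalizedAt (j : Fin 4) : Finset Word := {w | (∀ i, w i = 0 ↔ i = j) ∧ w (j + 1) = 1}

def frameCode (a : Fin 4 → Word) : Finset Word := insert 0 (univ.biUnion fun j => {a j, -a j})

/-- These are the eight copies of the tetracode, the linear ternary Hamming codes of length `4`. -/
def frameCodes : Finset (Finset Word) :=
  ({a ∈ Fintype.piFinset normalizedAt | ∀ j k, j ≠ k →
    3 ≤ hammingDist (a j) (a k) ∧ 3 ≤ hammingDist (a j) (-a k)}).image frameCode

theorem card_frameCodes : #frameCodes = 8 := by decide

theorem exists_mem_normalizedAt {w : Word} {j : Fin 4} (hw : ∀ i, w i = 0 ↔ i = j) :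
    ∃ a ∈ normalizedAt j, ({w, -w} : Finset Word) = {a, -a} := by
  have hw1 : w (j + 1) ≠ 0 := fun h => absurd ((hw _).1 h) (by fin_cases j <;> decide)
  obtain h | h : w (j + 1) = 1 ∨ w (j + 1) = -1 := by
    generalize w (j + 1) = x at hw1
    revert x
    decide
  · exact ⟨w, by simp [normalizedAt, hw, h], rfl⟩
  · exact ⟨-w, by simp [normalizedAt, hw, h], by rw [neg_neg, pair_comm]⟩

theorem hammingDist_neg_self {x : Word} {j : Fin 4} (hx : ∀ i, x i = 0 ↔ i = j) :
    hammingDist x (-x) = 3 := by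
  rw [hammingDist_eq_hammingNorm]
  refine hammingNorm_eq_three (j := j) fun i => ?_
  rw [← hx i, Pi.add_apply, Pi.neg_apply]
  generalize x i = y
  revert y
  decide

theorem zero_iff_of_mem_pair {a : Fin 4 → Word} (ha : ∀ j i, a j i = 0 ↔ i = j) {j : Fin 4}
    {x : Word} (hx : x ∈ ({a j, -a j} : Finset Word)) : ∀ i, x i = 0 ↔ i = j := by
  simp only [mem_insert, mem_singleton] at hx
  rcases hx with rfl | rfl <;> simp [ha]

theorem card_frameCode {a : Fin 4 → Word} (ha : ∀ j i, a j i = 0 ↔ i = j) :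
    #(frameCode a) = 9 := by
  have h0 : (0 : Word) ∉ univ.biUnion fun j => {a j, -a j} := by
    simp only [mem_biUnion, mem_univ, true_and, not_exists]
    intro j hj
    simpa using (zero_iff_of_mem_pair ha hj (j + 1)).1 rfl
  have hdisj : ((univ : Finset (Fin 4)) : Set (Fin 4)).PairwiseDisjoint
      fun j => ({a j, -a j} : Finset Word) :=
    fun j _ k _ hjk => disjoint_left.2 fun x hj hk =>
      hjk (((zero_iff_of_mem_pair ha hk) j).1 (((zero_iff_of_mem_pair ha hj) j).2 rfl))
  have hpair : ∀ j, a j ≠ -a j := fun j h =>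
    absurd (hammingDist_neg_self (ha j)) (by rw [← h, hammingDist_self]; decide)
  rw [frameCode, card_insert_of_notMem h0, card_biUnion hdisj,
    sum_const_nat fun j _ => card_pair (hpair j)]
  rfl

theorem le_hammingDist_frameCode {a : Fin 4 → Word} (ha : ∀ j i, a j i = 0 ↔ i = j)
    (hadm : ∀ j k, j ≠ k → 3 ≤ hammingDist (a j) (a k) ∧ 3 ≤ hammingDist (a j) (-a k)) :
    ∀ c ∈ frameCode a, ∀ c' ∈ frameCode a, c ≠ c' → 3 ≤ hammingDist c c' := by
  have hpair : ∀ j k, ∀ x ∈ ({a j, -a j} : Finset Word), ∀ y ∈ ({a k, -a k} : Finset Word),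
      x ≠ y → 3 ≤ hammingDist x y := by
    intro j k x hx y hy hxy
    simp only [mem_insert, mem_singleton] at hx hy
    obtain rfl | hjk := eq_or_ne j k
    · rcases hx with rfl | rfl <;> rcases hy with rfl | rfl
      · exact absurd rfl hxy
      · exact (hammingDist_neg_self (ha j)).ge
      · rw [hammingDist_comm]
        exact (hammingDist_neg_self (ha j)).ge
      · exact absurd rfl hxy
    · rcases hx with rfl | rfl <;> rcases hy with rfl | rfl
      · exact (hadm j k hjk).1
      · exact (hadm j k hjk).2
      · rw [← hammingDist_neg_neg, neg_neg]
        exact (hadm j k hjk).2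
      · rw [hammingDist_neg_neg]
        exact (hadm j k hjk).1
  have hnorm : ∀ j, ∀ x ∈ ({a j, -a j} : Finset Word), hammingNorm x = 3 :=
    fun j x hx => hammingNorm_eq_three (zero_iff_of_mem_pair ha hx)
  intro c hc c' hc' hne
  rw [frameCode, mem_insert, mem_biUnion] at hc hc'
  rcases hc with rfl | ⟨j, -, hc⟩ <;> rcases hc' with rfl | ⟨k, -, hc'⟩
  · exact absurd rfl hne
  · rw [hammingDist_zero_left, hnorm k c' hc']
  · rw [hammingDist_zero_right, hnorm j c hc]
  · exact hpair j k c hc c' hc' hne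

theorem IsPerfectCode.mem_frameCodes {D : Finset Word} (hD : IsPerfectCode D) (h0 : 0 ∈ D) :
    D ∈ frameCodes := by
  have hZ : ∀ j, ∃ a ∈ normalizedAt j, {d ∈ D.erase 0 | d j = 0} = {a, -a} := by
    intro j
    obtain ⟨x, y, hxy, hZ⟩ := card_eq_two.1 (hD.card_filter_eq_zero h0 j)
    have hx : x ∈ {d ∈ D.erase 0 | d j = 0} := hZ ▸ mem_insert_self x {y}
    have hy : y ∈ {d ∈ D.erase 0 | d j = 0} := hZ ▸ mem_insert_of_mem (mem_singleton_self y)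
    have hxD := mem_of_mem_erase (mem_filter.1 hx).1
    have hyD := mem_of_mem_erase (mem_filter.1 hy).1
    obtain ⟨a, ha, hpair⟩ := exists_mem_normalizedAt (hD.zero_iff_of_mem_filter h0 hx)
    refine ⟨a, ha, ?_⟩
    rw [hZ, hD.eq_neg hxD hyD hxy (hD.zero_iff_of_mem_filter h0 hx)
      (hD.zero_iff_of_mem_filter h0 hy), hpair]
  choose a ha hZ using hZ
  have ha' : ∀ j i, a j i = 0 ↔ i = j := fun j => (mem_filter.1 (ha j)).2.1
  have hsub : ∀ j, ({a j, -a j} : Finset Word) ⊆ D :=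
    fun j => hZ j ▸ (filter_subset _ _).trans (erase_subset _ _)
  have hne : ∀ j k, j ≠ k → ∀ y ∈ ({a k, -a k} : Finset Word), a j ≠ y :=
    fun j k hjk y hy h => hjk ((zero_iff_of_mem_pair ha' hy j).1 (h ▸ (ha' j j).2 rfl))
  have hadm : ∀ j k, j ≠ k → 3 ≤ hammingDist (a j) (a k) ∧ 3 ≤ hammingDist (a j) (-a k) :=
    fun j k hjk =>
      ⟨hD.2.1 _ (hsub j (mem_insert_self _ _)) _ (hsub k (mem_insert_self _ _))
        (hne j k hjk _ (mem_insert_self _ _)),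
      hD.2.1 _ (hsub j (mem_insert_self _ _)) _
        (hsub k (mem_insert_of_mem (mem_singleton_self _)))
        (hne j k hjk _ (mem_insert_of_mem (mem_singleton_self _)))⟩
  have hDa : D = frameCode a := by
    calc D = insert 0 (D.erase 0) := (insert_erase h0).symm
      _ = frameCode a := by rw [hD.erase_zero_eq_biUnion h0, frameCode]; simp only [hZ]
  exact mem_image.2 ⟨a, mem_filter.2 ⟨Fintype.mem_piFinset.2 ha, hadm⟩, hDa.symm⟩

theorem mem_frameCodes_iff {D : Finset Word} : D ∈ frameCodes ↔ IsPerfectCode D ∧ 0 ∈ D := by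
  refine ⟨fun hD => ?_, fun ⟨hD, h0⟩ => hD.mem_frameCodes h0⟩
  obtain ⟨a, ha, rfl⟩ := mem_image.1 hD
  obtain ⟨ha, hadm⟩ := mem_filter.1 ha
  have ha' : ∀ j i, a j i = 0 ↔ i = j := fun j => (mem_filter.1 (Fintype.mem_piFinset.1 ha j)).2.1
  exact ⟨.of_card_of_le_hammingDist (card_frameCode ha') (le_hammingDist_frameCode ha' hadm),
    mem_insert_self 0 _⟩

/-- There are exactly 72 ternary 1-perfect codes of length 4 in `F_3^4`:
sets of 9 words pairwise at Hamming distance ≥ 3 such that every word of `F_3^4` is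
within distance 1 of exactly one codeword. -/
theorem stmt_10 :
    Nat.card {C : Finset (Fin 4 → ZMod 3) //
      C.card = 9 ∧
      (∀ c ∈ C, ∀ c' ∈ C, c ≠ c' → 3 ≤ hammingDist c c') ∧
      ∀ x : Fin 4 → ZMod 3, ∃! c, c ∈ C ∧ hammingDist x c ≤ 1} = 72 := by
  have hball : Nat.card {c : Word // hammingDist 0 c ≤ 1} = 9 := by
    rw [Nat.card_eq_fintype_card, Fintype.card_subtype]
    simpa [hammingDist_zero_left] using card_ball_zero
  have hframe : Nat.card {D // IsPerfectCode D ∧ 0 ∈ D} = 8 := by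
    rw [← card_frameCodes, ← Fintype.card_coe, ← Nat.card_eq_fintype_card]
    exact Nat.card_congr (Equiv.subtypeEquivRight fun D => mem_frameCodes_iff.symm)
  change Nat.card {C // IsPerfectCode C} = 72
  rw [natCard_eq_mul_natCard_zero_mem IsPerfectCode (fun C v hC => hC.map_addRight v)
    fun C hC => hC.2.2 0, hball, hframe]
end

section
/- Any 1-perfect code C ⊆ F_3^{13} of length 13 that is concatenated, i.e., of the form C = ∪_{i=0}^{8} C_i P_{τ(i)} where ∪C_i is a distance-2 MDS code in F_3^9, has rank (dimension of linear span, assuming 0 ∈ C) at most 12. -/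
/-!
A distance-2 MDS code `M ⊆ 𝔽₃⁹` of size `3⁸` meets every coordinate line in exactly one point, so
it is the graph `x₀ = g(x₁, …, x₈)` of a function `g` that is a bijection along every line. Over
`𝔽₃` a bijection `𝔽₃ → 𝔽₃` is affine, and the three slopes of `g` in direction `i` along a line in
direction `j` are nonzero with sum `0`, hence equal; so `g` is affine and `M` lies in an affine
hyperplane. Since `0 ∈ M`, that hyperplane is linear, and the first nine coordinates of every
word of `C` satisfy its equation: `C` spans a proper subspace of `𝔽₃¹³`.
-/

open Function Matrix

theorem hammingDist_update_update_le_one {ι : Type*} {β : ι → Type*} [Fintype ι] [DecidableEq ι]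
    [∀ i, DecidableEq (β i)] (x : ∀ i, β i) (i : ι) (s t : β i) :
    hammingDist (update x i s) (update x i t) ≤ 1 := by
  have eq_of_ne : ∀ j, update x i s j ≠ update x i t j → j = i := fun j hj =>
    by_contra fun h => hj (by simp [h])
  refine Finset.card_le_one.2 fun j hj k hk => ?_
  rw [Finset.mem_filter] at hj hk
  rw [eq_of_ne j hj.2, eq_of_ne k hk.2]

theorem existsUnique_update_mem_of_two_le_hammingDist {ι α : Type*} [Fintype ι] [DecidableEq ι]
    [Fintype α] [DecidableEq α] {M : Set (ι → α)}
    (hcard : M.ncard = Fintype.card α ^ (Fintype.card ι - 1))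
    (hdist : ∀ x ∈ M, ∀ y ∈ M, x ≠ y → 2 ≤ hammingDist x y) (x : ι → α) (i : ι) :
    ∃! t, update x i t ∈ M := by
  have hline : ∀ y s t, update y i s ∈ M → update y i t ∈ M → s = t := by
    intro y s t hs ht
    by_contra hst
    have h2 := hdist _ hs _ ht fun h => hst (by simpa using congrFun h i)
    have h1 := hammingDist_update_update_le_one y i s t
    omega
  set restrict : (ι → α) → ({j // j ≠ i} → α) := fun f j => f j
  have eq_update_of_restrict_eq : ∀ f y, restrict f = restrict y → f = update y i (f i) := by
    intro f y h
    funext j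
    obtain rfl | hj := eq_or_ne j i
    · simp
    · simpa [hj] using congrFun h ⟨j, hj⟩
  have hinj : Set.InjOn restrict M := by
    intro f hf f' hf' h
    rw [eq_update_of_restrict_eq f' f h.symm] at hf' ⊢
    rw [← hline f _ _ (by rwa [update_eq_self]) hf', update_eq_self]
  have hsurj : restrict '' M = Set.univ := by
    refine Set.eq_of_subset_of_ncard_le (Set.subset_univ _) ?_
    rw [hinj.ncard_image, hcard, Set.ncard_univ]
    simp [Nat.card_eq_fintype_card, Fintype.card_subtype_compl]
  obtain ⟨m, hm, hmx⟩ := hsurj.symm ▸ Set.mem_univ (restrict x)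
  have hm' : update x i (m i) ∈ M := by rwa [← eq_update_of_restrict_eq m x hmx]
  exact ⟨m i, hm', fun t ht => hline x _ _ ht hm'⟩

theorem eq_of_forall_update_eq {ι α β : Type*} [Fintype ι] [DecidableEq ι] {f : (ι → α) → β}
    (hf : ∀ x i t, f (update x i t) = f x) (x y : ι → α) : f x = f y := by
  have key : ∀ s : Finset ι, f (s.piecewise y x) = f x := by
    intro s
    induction s using Finset.induction_on with
    | empty => simp
    | insert i s _ ih => rw [Finset.piecewise_insert, hf, ih]
  simpa using (key Finset.univ).symm

theorem zmod3_eq_add_mul_of_injective :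
    ∀ v : ZMod 3 → ZMod 3, Injective v → ∀ t, v t = v 0 + t * (v 1 - v 0) := by decide

theorem zmod3_sum_eq_zero_of_injective :
    ∀ v : ZMod 3 → ZMod 3, Injective v → ∑ t, v t = 0 := by decide

theorem zmod3_eq_of_sum_eq_zero :
    ∀ w : ZMod 3 → ZMod 3, (∀ t, w t ≠ 0) → ∑ t, w t = 0 → ∀ t s, w t = w s := by decide

theorem exists_eq_add_dotProduct_of_injective_update {κ : Type*} [Fintype κ] [DecidableEq κ]
    (g : (κ → ZMod 3) → ZMod 3) (hg : ∀ x i, Injective fun t => g (update x i t)) :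
    ∃ c : κ → ZMod 3, ∀ x, g x = g 0 + c ⬝ᵥ x := by
  set slope : (κ → ZMod 3) → κ → ZMod 3 := fun x i => g (update x i 1) - g (update x i 0)
  have slope_ne_zero : ∀ x i, slope x i ≠ 0 := fun x i h =>
    absurd (hg x i (sub_eq_zero.1 h)) (by decide)
  have slope_update : ∀ x i j t, slope (update x j t) i = slope x i := by
    intro x i j t
    obtain rfl | hji := eq_or_ne j i
    · simp only [slope, update_idem]
    -- summing over a line in direction `j` kills both terms of the slope
    have hsum : ∑ s, slope (update x j s) i = 0 := by
      simp only [slope, Finset.sum_sub_distrib, update_comm hji,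
        zmod3_sum_eq_zero_of_injective _ (hg _ j), sub_zero]
    have := zmod3_eq_of_sum_eq_zero _ (fun s => slope_ne_zero _ i) hsum t (x j)
    rwa [update_eq_self] at this
  have slope_eq : ∀ x i, slope x i = slope 0 i := fun x i =>
    eq_of_forall_update_eq (f := (slope · i)) (fun y j t => slope_update y i j t) x 0
  have g_update : ∀ x i t, g (update x i t) = g x + (t - x i) * slope 0 i := by
    intro x i t
    have h := zmod3_eq_add_mul_of_injective _ (hg x i)
    have hx := h (x i)
    simp only [update_eq_self] at hx
    rw [h t, hx, ← slope_eq x i]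
    ring
  refine ⟨slope 0, fun x => ?_⟩
  have h := eq_of_forall_update_eq (f := fun x => g x - slope 0 ⬝ᵥ x) (fun y i t => ?_) x 0
  · rw [dotProduct_zero, sub_zero] at h
    linear_combination h
  · rw [g_update, Pi.update_eq_sub_add_single, dotProduct_add, dotProduct_sub, dotProduct_single,
      dotProduct_single]
    ring

theorem exists_linearMap_eq_of_existsUnique_update_mem {n : ℕ} {M : Set (Fin (n + 1) → ZMod 3)}
    (hM : ∀ x i, ∃! t, update x i t ∈ M) :
    ∃ φ : (Fin (n + 1) → ZMod 3) →ₗ[ZMod 3] ZMod 3, φ ≠ 0 ∧ ∃ b, ∀ x ∈ M, φ x = b := by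
  have hcons : ∀ y : Fin n → ZMod 3, ∃! t, Fin.cons t y ∈ M := fun y => by
    simpa only [Fin.update_cons_zero] using hM (Fin.cons 0 y) 0
  choose g hgM hg_unique using hcons
  have hg : ∀ y i, Injective fun t => g (update y i t) := by
    intro y i t t' h
    dsimp only at h
    refine (hM (Fin.cons (g (update y i t)) y) i.succ).unique ?_ ?_
    · rw [← Fin.cons_update]; exact hgM _
    · rw [← Fin.cons_update, h]; exact hgM _
  obtain ⟨c, hc⟩ := exists_eq_add_dotProduct_of_injective_update g hg
  refine ⟨LinearMap.proj 0 - ∑ i, c i • LinearMap.proj i.succ, fun h => ?_, g 0, fun x hx => ?_⟩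
  · simpa using LinearMap.congr_fun h (Pi.single 0 1)
  · have hx0 : x 0 = g (Fin.tail x) := hg_unique _ _ (by simpa only [Fin.cons_self_tail] using hx)
    simp [hx0, hc (Fin.tail x), dotProduct, Fin.tail]

theorem finrank_span_lt_of_subset_ker {K V W : Type*} [DivisionRing K] [AddCommGroup V]
    [Module K V] [FiniteDimensional K V] [AddCommGroup W] [Module K W] {ψ : V →ₗ[K] W}
    (hψ : ψ ≠ 0) {S : Set V} (hS : S ⊆ LinearMap.ker ψ) :
    Module.finrank K (Submodule.span K S) < Module.finrank K V :=
  Submodule.finrank_lt <|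
    ne_top_of_le_ne_top (LinearMap.ker_eq_top.not.2 hψ) (Submodule.span_le.2 hS)

theorem stmt_11_general (Ci : Fin 9 → Set (Fin 9 → ZMod 3))
    (P : Fin 9 → Set (Fin 4 → ZMod 3)) (τ : Equiv.Perm (Fin 9))
    (hMcard : (⋃ i, Ci i).ncard = 3 ^ 8)
    (hMdist : ∀ x ∈ ⋃ i, Ci i, ∀ y ∈ ⋃ i, Ci i, x ≠ y → 2 ≤ hammingDist x y)
    (C : Set (Fin (9 + 4) → ZMod 3))
    (hC : C = ⋃ i, {w | ∃ c ∈ Ci i, ∃ p ∈ P (τ i), w = Fin.append c p})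
    (h0 : (0 : Fin (9 + 4) → ZMod 3) ∈ C) :
    Module.finrank (ZMod 3) (Submodule.span (ZMod 3) C) ≤ 12 := by
  obtain ⟨φ, hφ, b, hφM⟩ := exists_linearMap_eq_of_existsUnique_update_mem
    (existsUnique_update_mem_of_two_le_hammingDist (hMcard.trans (by simp)) hMdist)
  let ρ := LinearMap.funLeft (ZMod 3) (ZMod 3) (Fin.castAdd 4 : Fin 9 → Fin (9 + 4))
  have hρC : ∀ w ∈ C, ρ w ∈ ⋃ i, Ci i := by
    rw [hC]
    intro w hw
    obtain ⟨i, c, hc, p, -, rfl⟩ := Set.mem_iUnion.1 hw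
    exact Set.mem_iUnion.2 ⟨i, by simpa [ρ, LinearMap.funLeft, comp_def] using hc⟩
  have hb : b = 0 := by rw [← hφM _ (hρC 0 h0), map_zero, map_zero]
  have hker : C ⊆ LinearMap.ker (φ ∘ₗ ρ) := fun w hw => by
    simp [hφM _ (hρC w hw), hb]
  have hne : φ ∘ₗ ρ ≠ 0 := fun h => hφ <| (LinearMap.cancel_right
    (LinearMap.funLeft_surjective_of_injective _ _ _ (Fin.castAdd_injective 9 4))).1 h
  have hlt := finrank_span_lt_of_subset_ker hne hker
  rw [Module.finrank_fin_fun] at hlt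
  omega

/-- A concatenated ternary 1-perfect code of length 13 containing `0`
(built from a partition of a distance-2 MDS code in `F_3^9` and 1-perfect codes of
length 4) has rank (dimension of its linear span) at most 12. -/
theorem stmt_11 (Ci : Fin 9 → Set (Fin 9 → ZMod 3))
    (P : Fin 9 → Set (Fin 4 → ZMod 3)) (τ : Equiv.Perm (Fin 9))
    (hdisj : ∀ i j, i ≠ j → Disjoint (Ci i) (Ci j))
    (hMcard : (⋃ i, Ci i).ncard = 3 ^ 8)
    (hMdist : ∀ x ∈ ⋃ i, Ci i, ∀ y ∈ ⋃ i, Ci i, x ≠ y → 2 ≤ hammingDist x y)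
    (hP : ∀ i, ∀ x : Fin 4 → ZMod 3, ∃! p, p ∈ P i ∧ hammingDist x p ≤ 1)
    (C : Set (Fin (9 + 4) → ZMod 3))
    (hC : C = ⋃ i, {w | ∃ c ∈ Ci i, ∃ p ∈ P (τ i), w = Fin.append c p})
    (hperf : ∀ x : Fin (9 + 4) → ZMod 3, ∃! c, c ∈ C ∧ hammingDist x c ≤ 1)
    (h0 : (0 : Fin (9 + 4) → ZMod 3) ∈ C) :
    Module.finrank (ZMod 3) (Submodule.span (ZMod 3) C) ≤ 12 :=
  stmt_11_general Ci P τ hMcard hMdist C hC h0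
end

section
/- Every distance-2 MDS code in F_3^n (a set M ⊆ F_3^n with |M| = 3^{n-1} and minimum Hamming distance 2) is the solution set of an equation a_0 x_0 + ... + a_{n-1} x_{n-1} = b for some a_i ∈ {1,2} and b ∈ Z/3; in particular all distance-2 MDS codes in F_3^n are equivalent under isotopies (coordinatewise alphabet permutations). -/
/-!
A distance-2 code `M ⊆ α^(m+2)` of size `q^(m+1)` splits into slices `{x | (c, x) ∈ M}`, which
are pairwise disjoint distance-2 codes; by the Singleton bound each has size exactly `q^m`.
Over `ZMod 3`, by induction each slice is a hyperplane `a_c ⬝ᵥ x = b_c` with nonzero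
coefficients, normalised so that `a_c 0 = 1`. Disjoint normalised hyperplanes are parallel, so all
`a_c` coincide and `c ↦ b_c` is injective; every permutation of `ZMod 3` is affine (this is where
`q = 3` matters), so `M` is itself a hyperplane. Coordinatewise affine permutations carry any such
hyperplane onto any other.
-/

open Matrix Function

namespace DistTwoCode

section Slices

variable {α : Type*} {m : ℕ}

def slice (M : Set (Fin (m + 1) → α)) (c : α) : Set (Fin m → α) := {x | vecCons c x ∈ M}

lemma ncard_le_sum_ncard_slice [Fintype α] (M : Set (Fin (m + 1) → α)) :
    M.ncard ≤ ∑ c, (slice M c).ncard := by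
  have hcover : M ⊆ ⋃ c, vecCons c '' slice M c := fun x hx =>
    Set.mem_iUnion.2 ⟨x 0, Fin.tail x, (Fin.cons_self_tail x).symm ▸ hx, Fin.cons_self_tail x⟩
  calc M.ncard ≤ (⋃ c, vecCons c '' slice M c).ncard := Set.ncard_le_ncard hcover
    _ ≤ ∑ c, (vecCons c '' slice M c).ncard := Set.ncard_iUnion_le_of_fintype _
    _ ≤ ∑ c, (slice M c).ncard := Finset.sum_le_sum fun c _ => Set.ncard_image_le

variable [DecidableEq α]

lemma hammingDist_vecCons (a b : α) (x y : Fin m → α) :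
    hammingDist (vecCons a x) (vecCons b y) = (if a = b then 0 else 1) + hammingDist x y := by
  unfold hammingDist
  rw [Finset.card_filter, Finset.card_filter, Fin.sum_univ_succ]
  by_cases h : a = b <;> simp [h]

variable {M : Set (Fin (m + 1) → α)}

lemma pairwise_slice (hM : M.Pairwise (2 ≤ hammingDist · ·)) (c : α) :
    (slice M c).Pairwise (2 ≤ hammingDist · ·) := by
  intro x hx y hy hxy
  simpa [hammingDist_vecCons] using hM hx hy (by simpa [vecCons_inj] using hxy)

lemma disjoint_slice (hM : M.Pairwise (2 ≤ hammingDist · ·)) {c d : α} (hcd : c ≠ d) :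
    Disjoint (slice M c) (slice M d) := by
  refine Set.disjoint_left.2 fun x hc hd => ?_
  simpa [hammingDist_vecCons, hcd] using hM hc hd (by simp [vecCons_inj, hcd])

variable [Fintype α]

lemma ncard_le_of_pairwise (hM : M.Pairwise (2 ≤ hammingDist · ·)) :
    M.ncard ≤ Fintype.card α ^ m := by
  have hinj : Set.InjOn Fin.tail M := by
    intro x hx y hy hxy
    by_contra hne
    have := hM hx hy hne
    rw [← Fin.cons_self_tail x, ← Fin.cons_self_tail y, hxy] at this
    simp only [← vecCons.eq_def, hammingDist_vecCons, hammingDist_self] at this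
    split at this <;> omega
  calc M.ncard = (Fin.tail '' M).ncard := hinj.ncard_image.symm
    _ ≤ Nat.card (Fin m → α) := Set.ncard_le_card _
    _ = Fintype.card α ^ m := by simp

lemma ncard_slice {M : Set (Fin (m + 2) → α)} (hM : M.Pairwise (2 ≤ hammingDist · ·))
    (hcard : M.ncard = Fintype.card α ^ (m + 1)) (c : α) :
    (slice M c).ncard = Fintype.card α ^ m := by
  have hle : ∀ c, (slice M c).ncard ≤ Fintype.card α ^ m :=
    fun c => ncard_le_of_pairwise (pairwise_slice hM c)
  have hsum : ∑ c, (slice M c).ncard = ∑ _c : α, Fintype.card α ^ m := by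
    refine le_antisymm (Finset.sum_le_sum fun c _ => hle c) ?_
    simpa [hcard, pow_succ'] using ncard_le_sum_ncard_slice M
  exact (Finset.sum_eq_sum_iff_of_le fun c _ => hle c).1 hsum c (Finset.mem_univ c)

end Slices

section Hyperplanes

variable {K ι : Type*} [Field K] [Fintype ι]

def hyperplane (a : ι → K) (b : K) : Set (ι → K) := {x | a ⬝ᵥ x = b}

lemma mem_hyperplane {a x : ι → K} {b : K} : x ∈ hyperplane a b ↔ a ⬝ᵥ x = b := Iff.rfl

lemma hyperplane_smul {a : ι → K} {b c : K} (hc : c ≠ 0) :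
    hyperplane (c • a) (c * b) = hyperplane a b := by
  ext x
  simp [mem_hyperplane, smul_dotProduct, hc]

lemma exists_perm_image_hyperplane {a a' x y : ι → K} {b b' : K} (ha : ∀ i, a i ≠ 0)
    (ha' : ∀ i, a' i ≠ 0) (hx : x ∈ hyperplane a b) (hy : y ∈ hyperplane a' b') :
    ∃ θ : ι → Equiv.Perm K, (fun z i => θ i (z i)) '' hyperplane a b = hyperplane a' b' := by
  let θ i : Equiv.Perm K := ((Equiv.subRight (x i)).trans
    (Equiv.mulLeft₀ ((a' i)⁻¹ * a i) (by simp [ha i, ha' i]))).trans (Equiv.addLeft (y i))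
  have hθ : ∀ z, a' ⬝ᵥ (fun i => θ i (z i)) = a ⬝ᵥ z - b + b' := by
    intro z
    have hterm : ∀ i, a' i * θ i (z i) = a' i * y i + (a i * z i - a i * x i) := by
      intro i
      change a' i * (y i + (a' i)⁻¹ * a i * (z i - x i)) = _
      rw [mul_add, ← mul_assoc, ← mul_assoc, mul_inv_cancel₀ (ha' i), one_mul, mul_sub]
    rw [← mem_hyperplane.1 hx, ← mem_hyperplane.1 hy]
    simp only [dotProduct, hterm, Finset.sum_add_distrib, Finset.sum_sub_distrib]
    ring
  refine ⟨θ, ?_⟩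
  have hpre : hyperplane a b = Equiv.piCongrRight θ ⁻¹' hyperplane a' b' := by
    ext z
    change a ⬝ᵥ z = b ↔ a' ⬝ᵥ (fun i => θ i (z i)) = b'
    rw [hθ, add_eq_right, sub_eq_zero]
  rw [hpre]
  exact Set.image_preimage_eq _ (Equiv.piCongrRight θ).surjective

variable [DecidableEq ι]

lemma nonempty_hyperplane {a : ι → K} {i : ι} (ha : a i ≠ 0) (b : K) :
    (hyperplane a b).Nonempty :=
  ⟨Pi.single i (b / a i), by simp [mem_hyperplane, dotProduct_single, mul_div_cancel₀ _ ha]⟩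

lemma eq_of_disjoint_hyperplane {a a' : ι → K} {b b' : K} {i₀ : ι} (ha : a i₀ = 1)
    (ha' : a' i₀ = 1) (h : Disjoint (hyperplane a b) (hyperplane a' b')) : a = a' := by
  by_contra hne
  obtain ⟨i, hi⟩ := Function.ne_iff.1 hne
  have hi₀ : i ≠ i₀ := by rintro rfl; exact hi (ha.trans ha'.symm)
  have hd : a i - a' i ≠ 0 := sub_ne_zero.2 hi
  -- the equations restricted to the coordinates `i` and `i₀` form a solvable 2 × 2 system
  set t := (b - b') / (a i - a' i) with ht
  have hmem : Pi.single i t + Pi.single i₀ (b - a i * t) ∈ hyperplane a b := by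
    simp [mem_hyperplane, dotProduct_add, dotProduct_single, ha]
  have hmem' : Pi.single i t + Pi.single i₀ (b - a i * t) ∈ hyperplane a' b' := by
    simp only [mem_hyperplane, dotProduct_add, dotProduct_single, ha', ht]
    field_simp
    ring
  exact Set.disjoint_left.1 h hmem hmem'

end Hyperplanes

lemma ne_zero_iff_eq_one_or_eq_two (u : ZMod 3) : u ≠ 0 ↔ u = 1 ∨ u = 2 := by
  revert u; decide

lemma eq_affine_of_injective {f : ZMod 3 → ZMod 3} (hf : Injective f) (c : ZMod 3) :
    f c = (f 1 - f 0) * c + f 0 := by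
  revert f c; decide

lemma eq_hyperplane_of_slices {m : ℕ} {M : Set (Fin (m + 2) → ZMod 3)}
    (hM : M.Pairwise (2 ≤ hammingDist · ·))
    (hslice : ∀ c, ∃ a b, (∀ i, a i ≠ 0) ∧ slice M c = hyperplane a b) :
    ∃ a b, (∀ i, a i ≠ 0) ∧ M = hyperplane a b := by
  have hnorm : ∀ c, ∃ a b, (∀ i, a i ≠ 0) ∧ a 0 = 1 ∧ slice M c = hyperplane a b := by
    intro c
    obtain ⟨a, b, ha, hS⟩ := hslice c
    have ha0 := inv_ne_zero (ha 0)
    refine ⟨(a 0)⁻¹ • a, (a 0)⁻¹ * b, fun i => smul_ne_zero ha0 (ha i),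
      inv_mul_cancel₀ (ha 0), ?_⟩
    rw [hS, hyperplane_smul ha0]
  choose A B hA hA0 hS using hnorm
  have hA_eq : ∀ c, A c = A 0 := by
    intro c
    rcases eq_or_ne c 0 with rfl | hc
    · rfl
    · have hdisj := disjoint_slice hM hc
      rw [hS, hS] at hdisj
      exact eq_of_disjoint_hyperplane (hA0 c) (hA0 0) hdisj
  have hB : Injective B := by
    intro c d hcd
    by_contra hne
    have hdisj := disjoint_slice hM hne
    rw [hS, hS, hA_eq c, hA_eq d, hcd, disjoint_self, Set.bot_eq_empty] at hdisj
    exact (nonempty_hyperplane (hA 0 0) (B d)).ne_empty hdisj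
  set u := B 1 - B 0
  have hu : u ≠ 0 := sub_ne_zero.2 (hB.ne one_ne_zero)
  refine ⟨vecCons (-u) (A 0), B 0, Fin.cases (by simpa using hu) (by simpa using hA 0), ?_⟩
  ext x
  obtain ⟨c, x, rfl⟩ : ∃ c x', x = vecCons c x' :=
    ⟨x 0, Fin.tail x, (Fin.cons_self_tail x).symm⟩
  change x ∈ slice M c ↔ _
  rw [hS, hA_eq, mem_hyperplane, mem_hyperplane, cons_dotProduct_cons,
    eq_affine_of_injective hB c]
  constructor <;> intro h <;> linear_combination h

theorem eq_hyperplane_of_pairwise :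
    ∀ (n : ℕ) (M : Set (Fin n → ZMod 3)), M.ncard = 3 ^ (n - 1) →
      M.Pairwise (2 ≤ hammingDist · ·) → ∃ a b, (∀ i, a i ≠ 0) ∧ M = hyperplane a b
  | 0, M, hcard, _ => by
    obtain ⟨v, rfl⟩ := Set.ncard_eq_one.1 hcard
    refine ⟨![], 0, finZeroElim, ?_⟩
    ext x
    simp [mem_hyperplane, Subsingleton.elim x v]
  | 1, M, hcard, _ => by
    obtain ⟨v, rfl⟩ := Set.ncard_eq_one.1 hcard
    refine ⟨fun _ => 1, v 0, fun _ => one_ne_zero, ?_⟩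
    ext x
    simp [mem_hyperplane, dotProduct, funext_iff, Fin.forall_fin_one]
  | m + 2, M, hcard, hM => eq_hyperplane_of_slices hM fun c =>
    eq_hyperplane_of_pairwise (m + 1) (slice M c)
      (by simpa using ncard_slice hM (by simpa using hcard) c) (pairwise_slice hM c)

end DistTwoCode

open DistTwoCode in
/-- Every distance-2 MDS code in `F_3^n` (of size `3^{n-1}` and minimum
Hamming distance 2) is the solution set of an equation `a_0x_0 + … + a_{n-1}x_{n-1} = b`
with all `a_i ∈ {1,2}`; in particular any two distance-2 MDS codes in `F_3^n` are
equivalent under an isotopy (coordinatewise alphabet permutations). -/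
theorem stmt_12 (n : ℕ) (M M' : Set (Fin n → ZMod 3))
    (hMcard : M.ncard = 3 ^ (n - 1))
    (hMdist : ∀ x ∈ M, ∀ y ∈ M, x ≠ y → 2 ≤ hammingDist x y)
    (hM'card : M'.ncard = 3 ^ (n - 1))
    (hM'dist : ∀ x ∈ M', ∀ y ∈ M', x ≠ y → 2 ≤ hammingDist x y) :
    (∃ (a : Fin n → ZMod 3) (b : ZMod 3),
      (∀ i, a i = 1 ∨ a i = 2) ∧ M = {x | ∑ i, a i * x i = b}) ∧
    ∃ θ : Fin n → Equiv.Perm (ZMod 3),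
      (fun x : Fin n → ZMod 3 => fun i => θ i (x i)) '' M = M' := by
  obtain ⟨a, b, ha, rfl⟩ := eq_hyperplane_of_pairwise n M hMcard hMdist
  obtain ⟨a', b', ha', rfl⟩ := eq_hyperplane_of_pairwise n M' hM'card hM'dist
  obtain ⟨x, hx⟩ := Set.nonempty_of_ncard_ne_zero (by rw [hMcard]; positivity)
  obtain ⟨y, hy⟩ := Set.nonempty_of_ncard_ne_zero (by rw [hM'card]; positivity)
  exact ⟨⟨a, b, fun i => (ne_zero_iff_eq_one_or_eq_two _).1 (ha i), rfl⟩,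
    exists_perm_image_hyperplane ha ha' hx hy⟩
end

section
/- If C is a ternary code containing 0 whose kernel K = {v : v + C = C} has size |C|/3, then the linear span of C has size exactly 3·|C|. -/
/-- If `C ⊆ F_3^n` contains `0` and its kernel `K = {v : v + C = C}` has
size `|C|/3`, then the linear span of `C` has size exactly `3·|C|`. -/
theorem stmt_13 (n : ℕ) (C : Set (Fin n → ZMod 3))
    (h0 : (0 : Fin n → ZMod 3) ∈ C)
    (hker : 3 * {v : Fin n → ZMod 3 | (fun c => v + c) '' C = C}.ncard = C.ncard) :
    Nat.card (Submodule.span (ZMod 3) C) = 3 * C.ncard := by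
  set Kset : Set (Fin n → ZMod 3) := {v | (fun c => v + c) '' C = C} with hKdef
  have h3 : ∀ v : Fin n → ZMod 3, v + v + v = 0 := by
    intro v; funext i
    have : ∀ x : ZMod 3, x + x + x = 0 := by decide
    exact this (v i)
  have hK0 : (0 : Fin n → ZMod 3) ∈ Kset := by
    show (fun c => (0 : Fin n → ZMod 3) + c) '' C = C
    simp
  have hKadd : ∀ u v : Fin n → ZMod 3, u ∈ Kset → v ∈ Kset → u + v ∈ Kset := by
    intro u v hu hv
    show (fun c => u + v + c) '' C = C
    have hcomp : (fun c => u + v + c) = (fun c => u + c) ∘ (fun c => v + c) := by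
      funext c; simp [add_assoc]
    rw [hcomp, Set.image_comp]
    have hv' : (fun c => v + c) '' C = C := hv
    have hu' : (fun c => u + c) '' C = C := hu
    rw [hv', hu']
  have hKneg : ∀ v : Fin n → ZMod 3, v ∈ Kset → -v ∈ Kset := by
    intro v hv
    have h2 := hKadd v v hv hv
    rw [show -v = v + v from neg_eq_of_add_eq_zero_left (h3 v)]
    exact h2
  have hKsub : ∀ u v : Fin n → ZMod 3, u ∈ Kset → v ∈ Kset → u - v ∈ Kset := by
    intro u v hu hv
    rw [sub_eq_add_neg]; exact hKadd _ _ hu (hKneg _ hv)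
  have hcoset : ∀ v ∈ Kset, ∀ c ∈ C, v + c ∈ C := by
    intro v hv c hc
    have hv' : (fun x => v + x) '' C = C := hv
    rw [← hv']; exact ⟨c, hc, rfl⟩
  have hKsubC : ∀ v ∈ Kset, v ∈ C := by
    intro v hv; simpa using hcoset v hv 0 h0
  have hCfin : C.Finite := Set.toFinite C
  have hKfin : Kset.Finite := Set.toFinite _
  have hk1 : 0 < Kset.ncard := (Set.ncard_pos hKfin).mpr ⟨0, hK0⟩
  have hlt : Kset.ncard < C.ncard := by omega
  obtain ⟨a, haC, haK⟩ : ∃ a ∈ C, a ∉ Kset := by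
    rcases Set.not_subset.mp
      (fun h => absurd (Set.ncard_le_ncard h hKfin) (not_le.mpr hlt)) with ⟨a, h1, h2⟩
    exact ⟨a, h1, h2⟩
  by_cases hgood : ∃ b ∈ C, b ∉ Kset ∧ b - a ∉ Kset ∧ b - (a + a) ∉ Kset
  · -- good case
    obtain ⟨b, hbC, hbK, hba, hb2a⟩ := hgood
    -- negation helpers
    have hna : -a = a + a := neg_eq_of_add_eq_zero_left (h3 a)
    have hnaa : -(a + a) = a := neg_eq_of_add_eq_zero_right (h3 a)
    have hnb : -b = b + b := neg_eq_of_add_eq_zero_left (h3 b)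
    have hnbb : -(b + b) = b := neg_eq_of_add_eq_zero_right (h3 b)
    have hAA : a + a ∉ Kset := fun h => haK (by rw [← hnaa]; exact hKneg _ h)
    have hBB : b + b ∉ Kset := fun h => hbK (by rw [← hnbb]; exact hKneg _ h)
    have hab : a + b ∉ Kset := fun h => hb2a (by
      rw [sub_eq_add_neg, hnaa, add_comm]; exact h)
    have h2ab : (a + a) + b ∉ Kset := fun h => hba (by
      rw [sub_eq_add_neg, hna, add_comm]; exact h)
    have ha2b : a + (b + b) ∉ Kset := fun h => h2ab (by
      have hn := hKneg _ h
      rwa [show -(a + (b + b)) = (a + a) + b from by rw [neg_add, hna, hnbb]] at hn)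
    have h2a2b : (a + a) + (b + b) ∉ Kset := fun h => hab (by
      have hn := hKneg _ h
      rwa [show -((a + a) + (b + b)) = a + b from by rw [neg_add, hnaa, hnbb]] at hn)
    have hcases : ∀ d : ZMod 3, d = 0 ∨ d = 1 ∨ d = 2 := by decide
    have indep : ∀ r s : ZMod 3, r • a + s • b ∈ Kset → r = 0 ∧ s = 0 := by
      intro r s h
      rcases hcases r with rfl | rfl | rfl <;> rcases hcases s with rfl | rfl | rfl <;>
        simp only [zero_smul, one_smul, two_smul, zero_add, add_zero] at h
      · exact ⟨rfl, rfl⟩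
      · exact absurd h hbK
      · exact absurd h hBB
      · exact absurd h haK
      · exact absurd h hab
      · exact absurd h ha2b
      · exact absurd h hAA
      · exact absurd h h2ab
      · exact absurd h h2a2b
    -- C = Kset ∪ (a + Kset) ∪ (b + Kset)
    set A1 : Set (Fin n → ZMod 3) := (fun x => a + x) '' Kset with hA1def
    set B1 : Set (Fin n → ZMod 3) := (fun x => b + x) '' Kset with hB1def
    have hA1card : A1.ncard = Kset.ncard :=
      Set.ncard_image_of_injective Kset (add_right_injective a)
    have hB1card : B1.ncard = Kset.ncard :=
      Set.ncard_image_of_injective Kset (add_right_injective b)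
    have d1 : Disjoint Kset A1 := by
      rw [Set.disjoint_left]
      rintro x hx ⟨k, hk, rfl⟩
      exact haK (by simpa using hKsub _ _ hx hk)
    have d2 : Disjoint (Kset ∪ A1) B1 := by
      rw [Set.disjoint_left]
      rintro x (hx | ⟨k', hk', rfl⟩) hxB
      · rcases hxB with ⟨k, hk, rfl⟩
        exact hbK (by simpa using hKsub _ _ hx hk)
      · rcases hxB with ⟨k, hk, heq⟩
        refine hba ?_
        have h1 := hKsub _ _ hk' hk
        have heq' : b + k = a + k' := heq
        rw [show b - a = k' - k from by
          rw [sub_eq_sub_iff_add_eq_add, heq', add_comm]]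
        exact h1
    have hsub : Kset ∪ A1 ∪ B1 ⊆ C := by
      rintro x ((hx | ⟨k, hk, rfl⟩) | ⟨k, hk, rfl⟩)
      · exact hKsubC _ hx
      · show a + k ∈ C
        rw [add_comm]; exact hcoset k hk a haC
      · show b + k ∈ C
        rw [add_comm]; exact hcoset k hk b hbC
    have hucard : (Kset ∪ A1 ∪ B1).ncard = C.ncard := by
      rw [Set.ncard_union_eq d2 (Set.toFinite _) (Set.toFinite _),
        Set.ncard_union_eq d1 hKfin (Set.toFinite _), hA1card, hB1card]
      omega
    have hCeq : Kset ∪ A1 ∪ B1 = C :=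
      Set.eq_of_subset_of_ncard_le hsub (le_of_eq hucard.symm) hCfin
    -- the kernel as a submodule
    let Kmod : Submodule (ZMod 3) (Fin n → ZMod 3) :=
      { carrier := Kset
        add_mem' := fun hu hv => hKadd _ _ hu hv
        zero_mem' := hK0
        smul_mem' := by
          intro c x hx
          rcases hcases c with rfl | rfl | rfl
          · simpa using hK0
          · simpa using hx
          · rw [show (2 : ZMod 3) • x = x + x from two_smul _ x]
            exact hKadd _ _ hx hx }
    have hKmodmem : ∀ x : Fin n → ZMod 3, x ∈ Kmod ↔ x ∈ Kset := fun x => Iff.rfl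
    set W : Submodule (ZMod 3) (Fin n → ZMod 3) :=
      Kmod ⊔ Submodule.span (ZMod 3) {a, b} with hWdef
    have haW : a ∈ W :=
      Submodule.mem_sup_right (Submodule.subset_span (Set.mem_insert _ _))
    have hbW : b ∈ W :=
      Submodule.mem_sup_right (Submodule.subset_span (Set.mem_insert_of_mem _ rfl))
    have hspan : Submodule.span (ZMod 3) C = W := by
      apply le_antisymm
      · rw [Submodule.span_le]
        rw [← hCeq]
        rintro x ((hx | ⟨k, hk, rfl⟩) | ⟨k, hk, rfl⟩)
        · exact Submodule.mem_sup_left hx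
        · exact W.add_mem haW (Submodule.mem_sup_left hk)
        · exact W.add_mem hbW (Submodule.mem_sup_left hk)
      · apply sup_le
        · intro x hx
          exact Submodule.subset_span (hKsubC x hx)
        · exact le_trans (Submodule.span_mono
            (Set.insert_subset_iff.mpr ⟨haC, Set.singleton_subset_iff.mpr hbC⟩)) le_rfl
    -- count W
    have hmemW : ∀ (r s : ZMod 3) (k : Fin n → ZMod 3), k ∈ Kmod →
        r • a + s • b + k ∈ W := by
      intro r s k hk
      exact W.add_mem
        (Submodule.mem_sup_right (Submodule.mem_span_pair.mpr ⟨r, s, rfl⟩))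
        (Submodule.mem_sup_left hk)
    let f : (ZMod 3 × ZMod 3) × Kmod → W :=
      fun p => ⟨p.1.1 • a + p.1.2 • b + (p.2 : Fin n → ZMod 3), hmemW _ _ _ p.2.2⟩
    have hbij : Function.Bijective f := by
      constructor
      · rintro ⟨⟨r, s⟩, ⟨k, hk⟩⟩ ⟨⟨r', s'⟩, ⟨k', hk'⟩⟩ h
        have h' : r • a + s • b + k = r' • a + s' • b + k' := congrArg Subtype.val h
        have e1 : (r - r') • a + (s - s') • b = k' - k := by
          rw [sub_smul, sub_smul, sub_add_sub_comm, sub_eq_sub_iff_add_eq_add, h']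
          exact add_comm _ _
        have hmemsub : k' - k ∈ Kset := hKsub _ _ hk' hk
        obtain ⟨hr, hs⟩ := indep _ _ (by rw [e1]; exact hmemsub)
        have hr' : r = r' := sub_eq_zero.mp hr
        have hs' : s = s' := sub_eq_zero.mp hs
        subst hr' hs'
        have hkk : k = k' := by
          have := h'
          exact add_left_cancel (a := r • a + s • b) this
        subst hkk
        rfl
      · rintro ⟨x, hx⟩
        rcases Submodule.mem_sup.mp hx with ⟨k, hk, y, hy, rfl⟩
        rcases Submodule.mem_span_pair.mp hy with ⟨r, s, rfl⟩
        exact ⟨⟨⟨r, s⟩, ⟨k, hk⟩⟩, Subtype.ext (add_comm _ _)⟩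
    have hKcard : Nat.card Kmod = Kset.ncard := by
      rw [← Nat.card_coe_set_eq]
      exact Nat.card_congr (Equiv.subtypeEquivRight (fun x => Iff.rfl))
    have hWcard : Nat.card W = 9 * Kset.ncard := by
      rw [← Nat.card_congr (Equiv.ofBijective f hbij), Nat.card_prod, Nat.card_prod,
        Nat.card_zmod, hKcard]
    rw [hspan, hWcard]
    omega
  · -- degenerate case: contradiction
    exfalso
    push_neg at hgood
    set A1 : Set (Fin n → ZMod 3) := (fun x => a + x) '' Kset with hA1def
    set A2 : Set (Fin n → ZMod 3) := (fun x => (a + a) + x) '' Kset with hA2def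
    have hsub : C ⊆ Kset ∪ A1 ∪ A2 := by
      intro c hc
      by_cases h1 : c ∈ Kset
      · exact Or.inl (Or.inl h1)
      by_cases h2 : c - a ∈ Kset
      · exact Or.inl (Or.inr ⟨c - a, h2, show a + (c - a) = c by abel⟩)
      · exact Or.inr ⟨c - (a + a), hgood c hc h1 h2, show (a + a) + (c - (a + a)) = c by abel⟩
    have hA1card : A1.ncard = Kset.ncard :=
      Set.ncard_image_of_injective Kset (add_right_injective a)
    have hA2card : A2.ncard = Kset.ncard :=
      Set.ncard_image_of_injective Kset (add_right_injective (a + a))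
    have hcard : (Kset ∪ A1 ∪ A2).ncard ≤ C.ncard := by
      calc (Kset ∪ A1 ∪ A2).ncard ≤ (Kset ∪ A1).ncard + A2.ncard := Set.ncard_union_le _ _
        _ ≤ (Kset.ncard + A1.ncard) + A2.ncard := by
            have := Set.ncard_union_le Kset A1; omega
        _ ≤ C.ncard := by rw [hA1card, hA2card]; omega
    have hCeq : C = Kset ∪ A1 ∪ A2 :=
      Set.eq_of_subset_of_ncard_le hsub hcard (Set.toFinite _)
    have himg : (fun c => a + c) '' C ⊆ C := by
      rintro _ ⟨c, hc, rfl⟩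
      rw [hCeq] at hc ⊢
      rcases hc with (hk | ⟨k, hk, rfl⟩) | ⟨k, hk, rfl⟩
      · exact Or.inl (Or.inr ⟨c, hk, rfl⟩)
      · show a + (a + k) ∈ Kset ∪ A1 ∪ A2
        exact Or.inr ⟨k, hk, (add_assoc a a k)⟩
      · show a + ((a + a) + k) ∈ Kset ∪ A1 ∪ A2
        have heq : a + ((a + a) + k) = k := by
          rw [← add_assoc, show a + (a + a) = 0 from by rw [← add_assoc]; exact h3 a, zero_add]
        rw [heq]
        exact Or.inl (Or.inl hk)
    have heqC : (fun c => a + c) '' C = C :=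
      Set.eq_of_subset_of_ncard_le himg
        (le_of_eq (Set.ncard_image_of_injective C (add_right_injective a)).symm) hCfin
    exact haK heqC
end
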